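/- arXiv:1312.3478 — 4 statements merged into one kernel-verified Lean document; each statement's English description precedes it below -/
import Mathlib

section
/- The arc-based randomized network interdiction value equals the adaptive maximum flow value: Z_RNI = Z_ADP. That is, the minimum over probability distributions α on Ω of the maximum over s-t-flows x of the expected payoff Σ_{μ∈Ω} α(μ)·f(μ,x) equals the maximum over s-t-flows x of the minimum over μ∈Ω of f(μ,x). -/
open scoped BigOperators

section NetworkInterdiction

variable {V E : Type} [Fintype V] [Fintype E] [DecidableEq V] [DecidableEq E]

/-- The basic assumptions on the network: the source and the sink are distinct,
no arc enters the source, no arc leaves the sink, and capacities are nonnegative. -/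
def IsNetwork (src dst : E → V) (s t : V) (u : E → ℝ) : Prop :=
  s ≠ t ∧ (∀ e, dst e ≠ s) ∧ (∀ e, src e ≠ t) ∧ (∀ e, 0 ≤ u e)

/-- Flow conservation at every node other than `s` and `t`. -/
def Conserves (src dst : E → V) (s t : V) (x : E → ℝ) : Prop :=
  ∀ v : V, v ≠ s → v ≠ t →
    ∑ e : E, (if dst e = v then x e else 0) = ∑ e : E, (if src e = v then x e else 0)

/-- `x` is an s-t-flow with respect to capacities `u`. -/
def IsFlow (src dst : E → V) (s t : V) (u : E → ℝ) (x : E → ℝ) : Prop :=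
  (∀ e, 0 ≤ x e) ∧ (∀ e, x e ≤ u e) ∧ Conserves src dst s t x

/-- The value of a flow: the total flow into the sink `t`. -/
def flowVal (dst : E → V) (t : V) (x : E → ℝ) : ℝ :=
  ∑ e : E, (if dst e = t then x e else 0)

/-- The payoff `f(μ,x)`: the maximum value of an s-t-flow `y` with `0 ≤ y_e ≤ x_e`
on the surviving arcs and `y_e = 0` on the removed arcs `μ`. -/
noncomputable def payoffF (src dst : E → V) (s t : V) (μ : Finset E) (x : E → ℝ) : ℝ :=
  sSup {z : ℝ | ∃ y : E → ℝ, (∀ e, 0 ≤ y e) ∧ (∀ e ∉ μ, y e ≤ x e) ∧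
    (∀ e ∈ μ, y e = 0) ∧ Conserves src dst s t y ∧ z = flowVal dst t y}

/-- The scenario set `Ω`: all sets of exactly `Γ` arcs. -/
def Scenarios (E : Type) [Fintype E] [DecidableEq E] (Γ : ℕ) : Finset (Finset E) :=
  Finset.univ.filter fun μ => μ.card = Γ

/-- `α` is a probability distribution on the scenario set `Ω`. -/
def IsDist (E : Type) [Fintype E] [DecidableEq E] (Γ : ℕ) (α : Finset E → ℝ) : Prop :=
  (∀ μ, 0 ≤ α μ) ∧ (∀ μ, μ ∉ Scenarios E Γ → α μ = 0) ∧
    ∑ μ ∈ Scenarios E Γ, α μ = 1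

/-- `p` is (the list of arcs of) a directed path from `s` to `t`
visiting pairwise distinct vertices. -/
def IsSTPath (src dst : E → V) (s t : V) (p : List E) : Prop :=
  p ≠ [] ∧ (∀ e ∈ p.head?, src e = s) ∧ (∀ e ∈ p.getLast?, dst e = t) ∧
  p.Chain' (fun e f => dst e = src f) ∧ (p.map src ++ [t]).Nodup

/-- The (finite) set `𝒫` of all directed s-t-paths. -/
noncomputable def stPaths (src dst : E → V) (s t : V) : Finset (List E) :=
  @Finset.filter _ (IsSTPath src dst s t) (Classical.decPred _)
    ((Finset.univ : Finset {l : List E // l.Nodup}).image Subtype.val)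

/-- `xP` is a path-based s-t-flow with respect to capacities `u`. -/
noncomputable def IsPathFlow (src dst : E → V) (s t : V) (u : E → ℝ) (xP : List E → ℝ) : Prop :=
  (∀ p, 0 ≤ xP p) ∧ (∀ p, p ∉ stPaths src dst s t → xP p = 0) ∧
  ∀ e : E, (∑ p ∈ stPaths src dst s t, if e ∈ p then xP p else 0) ≤ u e

/-- The path-based payoff `g(μ,x)`: the total flow on paths containing no removed arc. -/
noncomputable def payoffG (src dst : E → V) (s t : V) (μ : Finset E) (xP : List E → ℝ) : ℝ :=
  ∑ p ∈ stPaths src dst s t,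
    max 0 (1 - ((p.countP fun e => decide (e ∈ μ)) : ℝ)) * xP p

/-- The network interdiction value `Z_NI`. -/
noncomputable def Z_NI (src dst : E → V) (s t : V) (u : E → ℝ) (Γ : ℕ) : ℝ :=
  sInf {z : ℝ | ∃ μ ∈ Scenarios E Γ,
    z = sSup {w : ℝ | ∃ x : E → ℝ, IsFlow src dst s t u x ∧ w = payoffF src dst s t μ x}}

/-- The adaptive maximum flow value `Z_ADP`. -/
noncomputable def Z_ADP (src dst : E → V) (s t : V) (u : E → ℝ) (Γ : ℕ) : ℝ :=
  sSup {z : ℝ | ∃ x : E → ℝ, IsFlow src dst s t u x ∧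
    z = sInf {w : ℝ | ∃ μ ∈ Scenarios E Γ, w = payoffF src dst s t μ x}}

/-- The (arc-based) randomized network interdiction value `Z_RNI`. -/
noncomputable def Z_RNI (src dst : E → V) (s t : V) (u : E → ℝ) (Γ : ℕ) : ℝ :=
  sInf {z : ℝ | ∃ α : Finset E → ℝ, IsDist E Γ α ∧
    z = sSup {w : ℝ | ∃ x : E → ℝ, IsFlow src dst s t u x ∧
      w = ∑ μ ∈ Scenarios E Γ, α μ * payoffF src dst s t μ x}}

/-- The path-based network interdiction value `Z_NI^Path`. -/
noncomputable def Z_NIPath (src dst : E → V) (s t : V) (u : E → ℝ) (Γ : ℕ) : ℝ :=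
  sInf {z : ℝ | ∃ μ ∈ Scenarios E Γ,
    z = sSup {w : ℝ | ∃ xP : List E → ℝ, IsPathFlow src dst s t u xP ∧
      w = payoffG src dst s t μ xP}}

/-- The path-based adaptive maximum flow value `Z_ADP^Path`. -/
noncomputable def Z_ADPPath (src dst : E → V) (s t : V) (u : E → ℝ) (Γ : ℕ) : ℝ :=
  sSup {z : ℝ | ∃ xP : List E → ℝ, IsPathFlow src dst s t u xP ∧
    z = sInf {w : ℝ | ∃ μ ∈ Scenarios E Γ, w = payoffG src dst s t μ xP}}

/-- The path-based randomized network interdiction value `Z_RNI^Path`. -/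
noncomputable def Z_RNIPath (src dst : E → V) (s t : V) (u : E → ℝ) (Γ : ℕ) : ℝ :=
  sInf {z : ℝ | ∃ α : Finset E → ℝ, IsDist E Γ α ∧
    z = sSup {w : ℝ | ∃ xP : List E → ℝ, IsPathFlow src dst s t u xP ∧
      w = ∑ μ ∈ Scenarios E Γ, α μ * payoffG src dst s t μ xP}}

/-- The value `Z_LO(θ)` of the parametric LO model. -/
noncomputable def Z_LOAt (src dst : E → V) (s t : V) (u : E → ℝ) (Γ : ℕ) (θ : ℝ) : ℝ :=
  sSup {z : ℝ | ∃ x : E → ℝ, IsFlow src dst s t u x ∧ (∀ e, x e ≤ θ) ∧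
    z = flowVal dst t x - Γ * θ}

/-- The optimal value `Z_LO` of the LO model. -/
noncomputable def Z_LO (src dst : E → V) (s t : V) (u : E → ℝ) (Γ : ℕ) : ℝ :=
  sSup {z : ℝ | ∃ θ : ℝ, 0 ≤ θ ∧ z = Z_LOAt src dst s t u Γ θ}

/-- `(x, θ)` is an optimal solution of the LO model. -/
noncomputable def IsLOOptimal (src dst : E → V) (s t : V) (u : E → ℝ) (Γ : ℕ)
    (x : E → ℝ) (θ : ℝ) : Prop :=
  IsFlow src dst s t u x ∧ 0 ≤ θ ∧ (∀ e, x e ≤ θ) ∧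
    flowVal dst t x - Γ * θ = Z_LO src dst s t u Γ

/-- The set `δ⁺(S)` of arcs going from `S` to its complement. -/
def cutArcs (src dst : E → V) (S : Finset V) : Finset E :=
  Finset.univ.filter fun e => src e ∈ S ∧ dst e ∉ S

/-- The capacity `Cap(S,θ)` of a cut with respect to the truncated capacities `u(θ)`. -/
noncomputable def cutCap (src dst : E → V) (u : E → ℝ) (S : Finset V) (θ : ℝ) : ℝ :=
  ∑ e ∈ cutArcs src dst S, min (u e) θ

/-- The set `A(S,θ)` of arcs in `δ⁺(S)` with `θ ≤ u_e`. -/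
noncomputable def cutA (src dst : E → V) (u : E → ℝ) (S : Finset V) (θ : ℝ) : Finset E :=
  @Finset.filter _ (fun e => θ ≤ u e) (Classical.decPred _) (cutArcs src dst S)

/-- The set `B(S,θ)` of arcs in `δ⁺(S)` with `θ < u_e`. -/
noncomputable def cutB (src dst : E → V) (u : E → ℝ) (S : Finset V) (θ : ℝ) : Finset E :=
  @Finset.filter _ (fun e => θ < u e) (Classical.decPred _) (cutArcs src dst S)

/-- A directed cycle (closed directed walk) all of whose arcs lie in `S`. -/
def HasCycleIn (src dst : E → V) (S : Set E) : Prop :=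
  ∃ c : List E, c ≠ [] ∧ (∀ e ∈ c, e ∈ S) ∧ c.Chain' (fun e f => dst e = src f) ∧
    ∀ e ∈ c.getLast?, ∀ f ∈ c.head?, dst e = src f

set_option linter.unusedSectionVars false

namespace ZRNIAux

variable {V E : Type} [Fintype V] [Fintype E] [DecidableEq V] [DecidableEq E]

/-- The feasible-value set whose supremum is `payoffF`. -/
def pset (src dst : E → V) (s t : V) (μ : Finset E) (x : E → ℝ) : Set ℝ :=
  {z : ℝ | ∃ y : E → ℝ, (∀ e, 0 ≤ y e) ∧ (∀ e ∉ μ, y e ≤ x e) ∧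
    (∀ e ∈ μ, y e = 0) ∧ Conserves src dst s t y ∧ z = flowVal dst t y}

lemma payoffF_eq_sSup (src dst : E → V) (s t : V) (μ : Finset E) (x : E → ℝ) :
    payoffF src dst s t μ x = sSup (pset src dst s t μ x) := rfl

lemma sum_ite_comb (P : E → Prop) [DecidablePred P] (a b : ℝ) (y1 y2 : E → ℝ) :
    ∑ e : E, (if P e then a * y1 e + b * y2 e else 0)
      = a * ∑ e : E, (if P e then y1 e else 0) + b * ∑ e : E, (if P e then y2 e else 0) := by
  rw [Finset.mul_sum, Finset.mul_sum, ← Finset.sum_add_distrib]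
  refine Finset.sum_congr rfl fun e _ => ?_
  split_ifs <;> ring

lemma conserves_zero (src dst : E → V) (s t : V) :
    Conserves src dst s t (fun _ => 0) := by
  intro v _ _; simp

lemma conserves_comb {src dst : E → V} {s t : V} {y1 y2 : E → ℝ} (a b : ℝ)
    (h1 : Conserves src dst s t y1) (h2 : Conserves src dst s t y2) :
    Conserves src dst s t (fun e => a * y1 e + b * y2 e) := by
  intro v hv1 hv2
  rw [sum_ite_comb (fun e => dst e = v), sum_ite_comb (fun e => src e = v),
    h1 v hv1 hv2, h2 v hv1 hv2]

lemma flowVal_comb (dst : E → V) (t : V) (a b : ℝ) (y1 y2 : E → ℝ) :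
    flowVal dst t (fun e => a * y1 e + b * y2 e)
      = a * flowVal dst t y1 + b * flowVal dst t y2 :=
  sum_ite_comb (fun e => dst e = t) a b y1 y2

lemma zero_mem_pset {src dst : E → V} {s t : V} {μ : Finset E} {x : E → ℝ}
    (hx : ∀ e, 0 ≤ x e) : (0 : ℝ) ∈ pset src dst s t μ x :=
  ⟨fun _ => 0, fun _ => le_refl 0, fun e _ => hx e, fun _ _ => rfl,
    conserves_zero src dst s t, by simp [flowVal]⟩

lemma pset_le {src dst : E → V} {s t : V} {μ : Finset E} {x : E → ℝ}
    (hx : ∀ e, 0 ≤ x e) {z : ℝ} (hz : z ∈ pset src dst s t μ x) :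
    z ≤ ∑ e : E, x e := by
  obtain ⟨y, hy0, hyx, hyμ, _, rfl⟩ := hz
  have h1 : flowVal dst t y ≤ ∑ e : E, y e := by
    refine Finset.sum_le_sum fun e _ => ?_
    split_ifs
    · exact le_refl _
    · exact hy0 e
  refine h1.trans (Finset.sum_le_sum fun e _ => ?_)
  by_cases he : e ∈ μ
  · rw [hyμ e he]; exact hx e
  · exact hyx e he

lemma bddAbove_pset {src dst : E → V} {s t : V} {μ : Finset E} {x : E → ℝ}
    (hx : ∀ e, 0 ≤ x e) : BddAbove (pset src dst s t μ x) :=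
  ⟨∑ e : E, x e, fun _ hz => pset_le hx hz⟩

lemma payoffF_nonneg {src dst : E → V} {s t : V} (μ : Finset E) {x : E → ℝ}
    (hx : ∀ e, 0 ≤ x e) : 0 ≤ payoffF src dst s t μ x :=
  le_csSup (bddAbove_pset hx) (zero_mem_pset hx)

lemma payoffF_le_sum {src dst : E → V} {s t : V} (μ : Finset E) {x : E → ℝ}
    (hx : ∀ e, 0 ≤ x e) : payoffF src dst s t μ x ≤ ∑ e : E, x e :=
  csSup_le ⟨0, zero_mem_pset hx⟩ fun _ hz => pset_le hx hz

lemma payoffF_zero {src dst : E → V} {s t : V} (μ : Finset E) :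
    payoffF src dst s t μ (fun _ => 0) = 0 := by
  have h1 : 0 ≤ payoffF src dst s t μ (fun _ => 0) :=
    payoffF_nonneg μ fun _ => le_refl 0
  have h2 : payoffF src dst s t μ (fun _ => 0) ≤ ∑ _e : E, (0 : ℝ) :=
    payoffF_le_sum μ fun _ => le_refl 0
  simp only [Finset.sum_const_zero] at h2
  linarith

lemma pset_comb {src dst : E → V} {s t : V} {μ : Finset E} {a b : ℝ}
    (ha : 0 ≤ a) (hb : 0 ≤ b) {z1 z2 : ℝ} {x1 x2 : E → ℝ}
    (h1 : z1 ∈ pset src dst s t μ x1) (h2 : z2 ∈ pset src dst s t μ x2) :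
    a * z1 + b * z2 ∈ pset src dst s t μ (fun e => a * x1 e + b * x2 e) := by
  obtain ⟨y1, hy10, hy1x, hy1μ, hc1, rfl⟩ := h1
  obtain ⟨y2, hy20, hy2x, hy2μ, hc2, rfl⟩ := h2
  refine ⟨fun e => a * y1 e + b * y2 e,
    fun e => add_nonneg (mul_nonneg ha (hy10 e)) (mul_nonneg hb (hy20 e)),
    fun e he => add_le_add (mul_le_mul_of_nonneg_left (hy1x e he) ha)
      (mul_le_mul_of_nonneg_left (hy2x e he) hb),
    fun e he => by show a * y1 e + b * y2 e = 0; rw [hy1μ e he, hy2μ e he]; ring,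
    conserves_comb a b hc1 hc2, (flowVal_comb dst t a b y1 y2).symm⟩

lemma payoffF_concave {src dst : E → V} {s t : V} (μ : Finset E) {x1 x2 : E → ℝ}
    (hx1 : ∀ e, 0 ≤ x1 e) (hx2 : ∀ e, 0 ≤ x2 e) {a b : ℝ} (ha : 0 ≤ a) (hb : 0 ≤ b) :
    a * payoffF src dst s t μ x1 + b * payoffF src dst s t μ x2
      ≤ payoffF src dst s t μ (fun e => a * x1 e + b * x2 e) := by
  have hx3 : ∀ e, 0 ≤ a * x1 e + b * x2 e := fun e =>
    add_nonneg (mul_nonneg ha (hx1 e)) (mul_nonneg hb (hx2 e))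
  refine le_of_forall_pos_le_add fun ε hε => ?_
  have hδpos : 0 < ε / (a + b + 1) := div_pos hε (by linarith)
  obtain ⟨z1, hz1, hz1'⟩ := exists_lt_of_lt_csSup ⟨0, zero_mem_pset hx1⟩
    (sub_lt_self (sSup (pset src dst s t μ x1)) hδpos)
  obtain ⟨z2, hz2, hz2'⟩ := exists_lt_of_lt_csSup ⟨0, zero_mem_pset hx2⟩
    (sub_lt_self (sSup (pset src dst s t μ x2)) hδpos)
  have hle : a * z1 + b * z2 ≤ payoffF src dst s t μ (fun e => a * x1 e + b * x2 e) :=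
    le_csSup (bddAbove_pset hx3) (pset_comb ha hb hz1 hz2)
  have hδε : ε / (a + b + 1) * (a + b + 1) = ε :=
    div_mul_cancel₀ ε (by positivity)
  have ha1 : a * payoffF src dst s t μ x1 ≤ a * (z1 + ε / (a + b + 1)) :=
    mul_le_mul_of_nonneg_left (by rw [payoffF_eq_sSup]; linarith) ha
  have hb1 : b * payoffF src dst s t μ x2 ≤ b * (z2 + ε / (a + b + 1)) :=
    mul_le_mul_of_nonneg_left (by rw [payoffF_eq_sSup]; linarith) hb
  nlinarith [hδpos.le]

lemma isFlow_zero {src dst : E → V} {s t : V} {u : E → ℝ} (hu : ∀ e, 0 ≤ u e) :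
    IsFlow src dst s t u (fun _ => 0) :=
  ⟨fun _ => le_refl 0, fun e => hu e, conserves_zero src dst s t⟩

lemma isFlow_comb {src dst : E → V} {s t : V} {u x1 x2 : E → ℝ}
    (h1 : IsFlow src dst s t u x1) (h2 : IsFlow src dst s t u x2)
    {a b : ℝ} (ha : 0 ≤ a) (hb : 0 ≤ b) (hab : a + b = 1) :
    IsFlow src dst s t u (fun e => a * x1 e + b * x2 e) := by
  refine ⟨fun e => add_nonneg (mul_nonneg ha (h1.1 e)) (mul_nonneg hb (h2.1 e)),
    fun e => ?_, conserves_comb a b h1.2.2 h2.2.2⟩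
  have ha1 : a * x1 e ≤ a * u e := mul_le_mul_of_nonneg_left (h1.2.1 e) ha
  have hb1 : b * x2 e ≤ b * u e := mul_le_mul_of_nonneg_left (h2.2.1 e) hb
  have hsum : a * u e + b * u e = u e := by rw [← add_mul, hab, one_mul]
  show a * x1 e + b * x2 e ≤ u e
  linarith

lemma payoffF_le_cap {src dst : E → V} {s t : V} {u : E → ℝ} (μ : Finset E)
    {x : E → ℝ} (hx : IsFlow src dst s t u x) :
    payoffF src dst s t μ x ≤ ∑ e : E, u e :=
  (payoffF_le_sum μ hx.1).trans (Finset.sum_le_sum fun e _ => hx.2.1 e)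

end ZRNIAux

open ZRNIAux in
/-- `Z_RNI = Z_ADP`. -/
theorem Z_RNI_eq_Z_ADP (src dst : E → V) (s t : V) (u : E → ℝ) (Γ : ℕ)
    (hnet : IsNetwork src dst s t u) (hΓ1 : 1 ≤ Γ) (hΓE : Γ ≤ Fintype.card E) :
    Z_RNI src dst s t u Γ = Z_ADP src dst s t u Γ := by
  classical
  obtain ⟨hst, hds, hst', hu⟩ := hnet
  -- a scenario exists
  obtain ⟨μ0, hμ0sub, hμ0card⟩ :=
    Finset.exists_subset_card_eq (s := (Finset.univ : Finset E)) (n := Γ) (by simpa using hΓE)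
  have hμ0 : μ0 ∈ Scenarios E Γ := Finset.mem_filter.2 ⟨Finset.mem_univ _, hμ0card⟩
  haveI hne : Nonempty {μ // μ ∈ Scenarios E Γ} := ⟨⟨μ0, hμ0⟩⟩
  have hflow0 : IsFlow src dst s t u (fun _ => 0) := isFlow_zero hu
  -- inner ADP sets
  have hINne : ∀ x : E → ℝ,
      {w : ℝ | ∃ μ ∈ Scenarios E Γ, w = payoffF src dst s t μ x}.Nonempty :=
    fun x => ⟨payoffF src dst s t μ0 x, μ0, hμ0, rfl⟩
  have hINbdd : ∀ x : E → ℝ, (∀ e, 0 ≤ x e) →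
      BddBelow {w : ℝ | ∃ μ ∈ Scenarios E Γ, w = payoffF src dst s t μ x} := by
    intro x hx
    refine ⟨0, ?_⟩
    rintro w ⟨μ, hμ, rfl⟩
    exact payoffF_nonneg μ hx
  -- the ADP set
  have hADne : {z : ℝ | ∃ x : E → ℝ, IsFlow src dst s t u x ∧
      z = sInf {w : ℝ | ∃ μ ∈ Scenarios E Γ, w = payoffF src dst s t μ x}}.Nonempty :=
    ⟨_, ⟨fun _ => 0, hflow0, rfl⟩⟩
  have hADbdd : BddAbove {z : ℝ | ∃ x : E → ℝ, IsFlow src dst s t u x ∧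
      z = sInf {w : ℝ | ∃ μ ∈ Scenarios E Γ, w = payoffF src dst s t μ x}} := by
    refine ⟨∑ e : E, u e, ?_⟩
    rintro z ⟨x, hx, rfl⟩
    exact (csInf_le (hINbdd x hx.1) ⟨μ0, hμ0, rfl⟩).trans (payoffF_le_cap μ0 hx)
  set v : ℝ := Z_ADP src dst s t u Γ with hv
  have hvS : v = sSup {z : ℝ | ∃ x : E → ℝ, IsFlow src dst s t u x ∧
      z = sInf {w : ℝ | ∃ μ ∈ Scenarios E Γ, w = payoffF src dst s t μ x}} := hv
  -- RNI inner sets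
  have hRNin_ne : ∀ α : Finset E → ℝ, (0:ℝ) ∈ {w : ℝ | ∃ x : E → ℝ, IsFlow src dst s t u x ∧
      w = ∑ μ ∈ Scenarios E Γ, α μ * payoffF src dst s t μ x} :=
    fun α => ⟨fun _ => 0, hflow0, by simp [payoffF_zero]⟩
  have hRNin_bdd : ∀ α : Finset E → ℝ, IsDist E Γ α →
      BddAbove {w : ℝ | ∃ x : E → ℝ, IsFlow src dst s t u x ∧
        w = ∑ μ ∈ Scenarios E Γ, α μ * payoffF src dst s t μ x} := by
    intro α hα
    refine ⟨∑ e : E, u e, ?_⟩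
    rintro w ⟨x, hx, rfl⟩
    calc ∑ μ ∈ Scenarios E Γ, α μ * payoffF src dst s t μ x
        ≤ ∑ μ ∈ Scenarios E Γ, α μ * ∑ e : E, u e :=
          Finset.sum_le_sum fun μ _ =>
            mul_le_mul_of_nonneg_left (payoffF_le_cap μ hx) (hα.1 μ)
      _ = ∑ e : E, u e := by rw [← Finset.sum_mul, hα.2.2, one_mul]
  -- direction 1 : v is a lower bound for everything in the RNI set
  have hdir1 : ∀ α : Finset E → ℝ, IsDist E Γ α →
      v ≤ sSup {w : ℝ | ∃ x : E → ℝ, IsFlow src dst s t u x ∧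
        w = ∑ μ ∈ Scenarios E Γ, α μ * payoffF src dst s t μ x} := by
    intro α hα
    rw [hvS]
    refine csSup_le hADne ?_
    rintro a ⟨x, hx, rfl⟩
    calc sInf {w : ℝ | ∃ μ ∈ Scenarios E Γ, w = payoffF src dst s t μ x}
        = ∑ μ ∈ Scenarios E Γ,
            α μ * sInf {w : ℝ | ∃ μ ∈ Scenarios E Γ, w = payoffF src dst s t μ x} := by
          rw [← Finset.sum_mul, hα.2.2, one_mul]
      _ ≤ ∑ μ ∈ Scenarios E Γ, α μ * payoffF src dst s t μ x :=
          Finset.sum_le_sum fun μ hμ => mul_le_mul_of_nonneg_left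
            (csInf_le (hINbdd x hx.1) ⟨μ, hμ, rfl⟩) (hα.1 μ)
      _ ≤ _ := le_csSup (hRNin_bdd α hα) ⟨x, hx, rfl⟩
  -- the two convex sets for separation
  set C : Set (EuclideanSpace ℝ {μ // μ ∈ Scenarios E Γ}) :=
    {c | ∃ x : E → ℝ, IsFlow src dst s t u x ∧
      ∀ i : {μ // μ ∈ Scenarios E Γ}, c i ≤ payoffF src dst s t i.1 x} with hCdef
  set Uo : Set (EuclideanSpace ℝ {μ // μ ∈ Scenarios E Γ}) :=
    {d | ∀ i : {μ // μ ∈ Scenarios E Γ}, v < d i} with hUodef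
  have hC0 : (0 : EuclideanSpace ℝ {μ // μ ∈ Scenarios E Γ}) ∈ C := by
    simp only [hCdef, Set.mem_setOf_eq]
    exact ⟨fun _ => 0, hflow0, fun i => by
      simpa using payoffF_nonneg i.1 (fun _ => le_refl (0:ℝ))⟩
  have hCconv : Convex ℝ C := by
    rintro c1 hc1 c2 hc2 a b ha hb hab
    simp only [hCdef, Set.mem_setOf_eq] at hc1 hc2 ⊢
    obtain ⟨x1, hx1, h1⟩ := hc1
    obtain ⟨x2, hx2, h2⟩ := hc2
    refine ⟨fun e => a * x1 e + b * x2 e, isFlow_comb hx1 hx2 ha hb hab, fun i => ?_⟩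
    have happ : (a • c1 + b • c2) i = a * c1 i + b * c2 i := rfl
    rw [happ]
    exact (add_le_add (mul_le_mul_of_nonneg_left (h1 i) ha)
      (mul_le_mul_of_nonneg_left (h2 i) hb)).trans
      (payoffF_concave i.1 hx1.1 hx2.1 ha hb)
  have hUconv : Convex ℝ Uo := by
    rintro d1 hd1 d2 hd2 a b ha hb hab
    simp only [hUodef, Set.mem_setOf_eq] at hd1 hd2 ⊢
    intro i
    have happ : (a • d1 + b • d2) i = a * d1 i + b * d2 i := rfl
    rw [happ]
    have h3 : a * v + b * v = v := by rw [← add_mul, hab, one_mul]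
    rcases ha.lt_or_eq with ha' | ha'
    · have h1 : a * v < a * d1 i := mul_lt_mul_of_pos_left (hd1 i) ha'
      have h2 : b * v ≤ b * d2 i := mul_le_mul_of_nonneg_left (hd2 i).le hb
      linarith
    · have hb1 : b = 1 := by linarith
      rw [← ha', hb1]
      simpa using hd2 i
  have hUopen : IsOpen Uo := by
    have heq : Uo = ⋂ i : {μ // μ ∈ Scenarios E Γ},
        (EuclideanSpace.proj i : EuclideanSpace ℝ {μ // μ ∈ Scenarios E Γ} →L[ℝ] ℝ) ⁻¹'
          Set.Ioi v := by
      ext d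
      constructor
      · intro hd
        refine Set.mem_iInter.2 fun i => ?_
        exact hd i
      · intro hd i
        exact Set.mem_iInter.1 hd i
    rw [heq]
    exact isOpen_iInter_of_finite fun i =>
      (isOpen_Ioi).preimage (EuclideanSpace.proj i).continuous
  have hdisj : Disjoint Uo C := by
    rw [Set.disjoint_left]
    rintro c hcU hcC
    simp only [hUodef, hCdef, Set.mem_setOf_eq] at hcU hcC
    obtain ⟨x, hx, hcx⟩ := hcC
    have h1 : sInf {w : ℝ | ∃ μ ∈ Scenarios E Γ, w = payoffF src dst s t μ x} ≤ v := by
      rw [hvS]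
      exact le_csSup hADbdd ⟨x, hx, rfl⟩
    have hne' : (Finset.univ : Finset {μ // μ ∈ Scenarios E Γ}).Nonempty :=
      Finset.univ_nonempty
    have hvm : v < Finset.inf' Finset.univ hne' (fun i => c i) :=
      (Finset.lt_inf'_iff hne').2 fun i _ => hcU i
    have h2 : v < sInf {w : ℝ | ∃ μ ∈ Scenarios E Γ, w = payoffF src dst s t μ x} := by
      refine hvm.trans_le (le_csInf (hINne x) ?_)
      rintro w ⟨μ, hμ, rfl⟩
      exact (Finset.inf'_le _ (Finset.mem_univ ⟨μ, hμ⟩)).trans (hcx ⟨μ, hμ⟩)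
    exact absurd h1 (not_le.2 h2)
  -- separation
  obtain ⟨φ, u0, hφU, hφC⟩ := geometric_hahn_banach_open hUconv hUopen hCconv hdisj
  have hφ_apply : ∀ c : EuclideanSpace ℝ {μ // μ ∈ Scenarios E Γ},
      φ c = ∑ i : {μ // μ ∈ Scenarios E Γ}, c i * φ (EuclideanSpace.single i (1:ℝ)) := by
    intro c
    have hrepr := OrthonormalBasis.sum_repr
      (EuclideanSpace.basisFun {μ // μ ∈ Scenarios E Γ} ℝ) c
    conv_lhs => rw [← hrepr]
    rw [map_sum]
    refine Finset.sum_congr rfl fun i _ => ?_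
    rw [map_smul, EuclideanSpace.basisFun_repr, EuclideanSpace.basisFun_apply, smul_eq_mul]
  set β : {μ // μ ∈ Scenarios E Γ} → ℝ :=
    fun i => -φ (EuclideanSpace.single i (1:ℝ)) with hβdef
  have hbi : ∀ i, φ (EuclideanSpace.single i (1:ℝ)) = -β i := by
    intro i; rw [hβdef]; ring
  have hsumφ : ∀ c : EuclideanSpace ℝ {μ // μ ∈ Scenarios E Γ},
      φ c = -∑ i : {μ // μ ∈ Scenarios E Γ}, c i * β i := by
    intro c
    rw [hφ_apply, ← Finset.sum_neg_distrib]
    refine Finset.sum_congr rfl fun i _ => ?_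
    rw [hbi]; ring
  have hφ00 : u0 ≤ (0:ℝ) := by simpa using hφC 0 hC0
  have hβnn : ∀ i, 0 ≤ β i := by
    intro i
    by_contra hneg
    push_neg at hneg
    have hfs : 0 < φ (EuclideanSpace.single i (1:ℝ)) := by
      have := hbi i; linarith
    have hmem : (-((1 - u0) / φ (EuclideanSpace.single i (1:ℝ)))) •
        EuclideanSpace.single i (1:ℝ) ∈ C := by
      simp only [hCdef, Set.mem_setOf_eq]
      refine ⟨fun _ => 0, hflow0, fun j => ?_⟩
      have happ : ((-((1 - u0) / φ (EuclideanSpace.single i (1:ℝ)))) •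
          EuclideanSpace.single i (1:ℝ)) j
          = -((1 - u0) / φ (EuclideanSpace.single i (1:ℝ))) * (if j = i then 1 else 0) := by
        rw [PiLp.smul_apply, EuclideanSpace.single_apply, smul_eq_mul]
      rw [happ]
      refine le_trans ?_ (payoffF_nonneg j.1 fun _ => le_refl (0:ℝ))
      have hMpos : 0 < (1 - u0) / φ (EuclideanSpace.single i (1:ℝ)) :=
        div_pos (by linarith) hfs
      split_ifs <;> nlinarith
    have hval := hφC _ hmem
    rw [map_smul, smul_eq_mul] at hval
    have h2 : -((1 - u0) / φ (EuclideanSpace.single i (1:ℝ))) *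
        φ (EuclideanSpace.single i (1:ℝ)) = u0 - 1 := by
      field_simp
      ring
    rw [h2] at hval
    linarith
  have hTnn : 0 ≤ ∑ j : {μ // μ ∈ Scenarios E Γ}, β j :=
    Finset.sum_nonneg fun j _ => hβnn j
  have hTpos : 0 < ∑ j : {μ // μ ∈ Scenarios E Γ}, β j := by
    rcases hTnn.lt_or_eq with h | h
    · exact h
    · exfalso
      have hall := (Finset.sum_eq_zero_iff_of_nonneg fun j _ => hβnn j).1 h.symm
      have hφz : ∀ c : EuclideanSpace ℝ {μ // μ ∈ Scenarios E Γ}, φ c = 0 := by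
        intro c
        rw [hsumφ]
        have : ∀ i ∈ Finset.univ, c i * β i = 0 := fun i hi => by
          rw [hall i hi, mul_zero]
        rw [Finset.sum_eq_zero this, neg_zero]
      have hUelt : (WithLp.toLp 2 (fun _ => v + 1) : EuclideanSpace ℝ {μ // μ ∈ Scenarios E Γ}) ∈ Uo := by
        simp only [hUodef, Set.mem_setOf_eq]
        intro i
        show v < v + 1
        linarith
      have h1 := hφU _ hUelt
      rw [hφz] at h1
      linarith
  -- the key inequality
  have hCle : ∀ c ∈ C, ∑ i : {μ // μ ∈ Scenarios E Γ}, c i * β i ≤ -u0 := by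
    intro c hc
    have h := hφC c hc
    rw [hsumφ] at h
    linarith
  have hUgt : ∀ ε : ℝ, 0 < ε →
      -u0 < (v + ε) * ∑ j : {μ // μ ∈ Scenarios E Γ}, β j := by
    intro ε hε
    have hmem : (WithLp.toLp 2 (fun _ => v + ε) : EuclideanSpace ℝ {μ // μ ∈ Scenarios E Γ}) ∈ Uo := by
      simp only [hUodef, Set.mem_setOf_eq]
      intro i
      show v < v + ε
      linarith
    have h := hφU _ hmem
    rw [hsumφ] at h
    have heq : ∑ i : {μ // μ ∈ Scenarios E Γ},
        ((WithLp.toLp 2 (fun _ => v + ε) : EuclideanSpace ℝ {μ // μ ∈ Scenarios E Γ}) i) * β i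
        = (v + ε) * ∑ j : {μ // μ ∈ Scenarios E Γ}, β j := by
      rw [Finset.mul_sum]
    rw [heq] at h
    linarith
  have hkey : ∀ x : E → ℝ, IsFlow src dst s t u x →
      ∑ i : {μ // μ ∈ Scenarios E Γ},
        (β i / ∑ j : {μ // μ ∈ Scenarios E Γ}, β j) * payoffF src dst s t i.1 x ≤ v := by
    intro x hx
    have hcx : (WithLp.toLp 2 (fun i : {μ // μ ∈ Scenarios E Γ} => payoffF src dst s t i.1 x) :
        EuclideanSpace ℝ {μ // μ ∈ Scenarios E Γ}) ∈ C := by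
      simp only [hCdef, Set.mem_setOf_eq]
      exact ⟨x, hx, fun i => le_refl _⟩
    have h1 : ∑ i : {μ // μ ∈ Scenarios E Γ}, payoffF src dst s t i.1 x * β i ≤ -u0 :=
      hCle _ hcx
    have h3 : ∑ i : {μ // μ ∈ Scenarios E Γ}, payoffF src dst s t i.1 x * β i
        ≤ v * ∑ j : {μ // μ ∈ Scenarios E Γ}, β j := by
      refine le_of_forall_pos_le_add fun ε hε => ?_
      have h2 := hUgt (ε / ∑ j : {μ // μ ∈ Scenarios E Γ}, β j) (div_pos hε hTpos)
      have heqε : (v + ε / ∑ j : {μ // μ ∈ Scenarios E Γ}, β j) *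
          ∑ j : {μ // μ ∈ Scenarios E Γ}, β j
          = v * (∑ j : {μ // μ ∈ Scenarios E Γ}, β j) + ε := by
        rw [add_mul, div_mul_cancel₀ _ hTpos.ne']
      rw [heqε] at h2
      linarith
    have h4 : (∑ i : {μ // μ ∈ Scenarios E Γ}, payoffF src dst s t i.1 x * β i) /
        (∑ j : {μ // μ ∈ Scenarios E Γ}, β j) ≤ v := by
      rw [div_le_iff₀ hTpos]
      exact h3
    calc ∑ i : {μ // μ ∈ Scenarios E Γ},
          (β i / ∑ j : {μ // μ ∈ Scenarios E Γ}, β j) * payoffF src dst s t i.1 x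
        = (∑ i : {μ // μ ∈ Scenarios E Γ}, payoffF src dst s t i.1 x * β i) /
            (∑ j : {μ // μ ∈ Scenarios E Γ}, β j) := by
          rw [Finset.sum_div]
          exact Finset.sum_congr rfl fun i _ => by ring
      _ ≤ v := h4
  -- the optimal distribution
  set α' : Finset E → ℝ := fun μ =>
    if h : μ ∈ Scenarios E Γ then β ⟨μ, h⟩ / ∑ j : {μ // μ ∈ Scenarios E Γ}, β j else 0
    with hα'def
  have hconv : ∀ g : {μ // μ ∈ Scenarios E Γ} → ℝ,
      (∑ μ ∈ Scenarios E Γ, if h : μ ∈ Scenarios E Γ then g ⟨μ, h⟩ else 0)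
        = ∑ i : {μ // μ ∈ Scenarios E Γ}, g i := by
    intro g
    rw [Finset.univ_eq_attach, ← Finset.sum_attach (Scenarios E Γ)
      (fun μ => if h : μ ∈ Scenarios E Γ then g ⟨μ, h⟩ else 0)]
    exact Finset.sum_congr rfl fun i _ => dif_pos i.2
  have hdist : IsDist E Γ α' := by
    refine ⟨fun μ => ?_, fun μ hμ => by rw [hα'def]; exact dif_neg hμ, ?_⟩
    · rw [hα'def]
      dsimp only
      split_ifs with h
      · exact div_nonneg (hβnn _) hTnn
      · exact le_refl 0
    · rw [hα'def]
      rw [hconv fun i => β i / ∑ j : {μ // μ ∈ Scenarios E Γ}, β j]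
      rw [← Finset.sum_div]
      exact div_self hTpos.ne'
  have hsumconv : ∀ x : E → ℝ,
      ∑ μ ∈ Scenarios E Γ, α' μ * payoffF src dst s t μ x
        = ∑ i : {μ // μ ∈ Scenarios E Γ},
            (β i / ∑ j : {μ // μ ∈ Scenarios E Γ}, β j) * payoffF src dst s t i.1 x := by
    intro x
    rw [← hconv fun i =>
      (β i / ∑ j : {μ // μ ∈ Scenarios E Γ}, β j) * payoffF src dst s t i.1 x]
    refine Finset.sum_congr rfl fun μ hμ => ?_
    rw [hα'def]
    dsimp only
    rw [dif_pos hμ, dif_pos hμ]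
  -- assemble
  have hRNle : sSup {w : ℝ | ∃ x : E → ℝ, IsFlow src dst s t u x ∧
      w = ∑ μ ∈ Scenarios E Γ, α' μ * payoffF src dst s t μ x} ≤ v := by
    refine csSup_le ⟨0, hRNin_ne α'⟩ ?_
    rintro w ⟨x, hx, rfl⟩
    rw [hsumconv x]
    exact hkey x hx
  have hRN_bddBelow : BddBelow {z : ℝ | ∃ α : Finset E → ℝ, IsDist E Γ α ∧
      z = sSup {w : ℝ | ∃ x : E → ℝ, IsFlow src dst s t u x ∧
        w = ∑ μ ∈ Scenarios E Γ, α μ * payoffF src dst s t μ x}} := by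
    refine ⟨0, ?_⟩
    rintro z ⟨α, hα, rfl⟩
    exact le_csSup (hRNin_bdd α hα) (hRNin_ne α)
  have hle1 : Z_RNI src dst s t u Γ ≤ v := by
    refine le_trans (csInf_le hRN_bddBelow ⟨α', hdist, rfl⟩) hRNle
  have hle2 : v ≤ Z_RNI src dst s t u Γ := by
    refine le_csInf ⟨_, α', hdist, rfl⟩ ?_
    rintro z ⟨α, hα, rfl⟩
    exact hdir1 α hα
  rw [hv] at hle1 hle2
  exact le_antisymm hle1 hle2

end NetworkInterdiction
end

section
/- The path-based randomized network interdiction value equals the path-based adaptive maximum flow value: Z_RNI^Path = Z_ADP^Path. That is, the minimum over probability distributions α on Ω of the maximum over path-based flows x of Σ_{μ∈Ω} α(μ)·g(μ,x) equals the maximum over path-based flows x of the minimum over μ∈Ω of g(μ,x). -/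
open scoped BigOperators

section NetworkInterdiction

variable {V E : Type} [Fintype V] [Fintype E] [DecidableEq V] [DecidableEq E]

/-! ### Auxiliary lemmas for the proof -/

lemma minimax_aux {n : Type} [Fintype n] [Nonempty n] (K : Set (n → ℝ))
    (hKc : IsCompact K) (hKcv : Convex ℝ K) (v ε : ℝ) (hε : 0 < ε)
    (hv : ∀ k ∈ K, ∃ i, k i ≤ v) :
    ∃ lam : n → ℝ, (∀ i, 0 ≤ lam i) ∧ ∑ i, lam i = 1 ∧
      ∀ k ∈ K, ∑ i, lam i * k i ≤ v + ε := by
  classical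
  open Pointwise in
  rcases K.eq_empty_or_nonempty with hKe | ⟨k0, hk0⟩
  · obtain ⟨i0⟩ := ‹Nonempty n›
    refine ⟨fun i => if i = i0 then 1 else 0, ?_, ?_, ?_⟩
    · intro i; simp only []; split <;> norm_num
    · simp
    · intro k hk; simp [hKe] at hk
  set O : Set (n → ℝ) := {y | ∀ i, y i ≤ 0} with hO
  have hOcl : IsClosed O := by
    have : O = ⋂ i, {y : n → ℝ | y i ≤ 0} := by ext y; simp [hO]
    rw [this]
    exact isClosed_iInter fun i => isClosed_le (continuous_apply i) continuous_const
  have hOcv : Convex ℝ O := by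
    intro a ha b hb p q hp hq hpq i
    have := ha i; have := hb i
    have : p * a i + q * b i ≤ 0 := by nlinarith
    simpa using this
  set C : Set (n → ℝ) := K + O with hC
  have hCcl : IsClosed C := hOcl.add_left_of_isCompact hKc
  have hCcv : Convex ℝ C := hKcv.add hOcv
  set z : n → ℝ := fun _ => v + ε with hz
  have hzC : z ∉ C := by
    rintro ⟨k, hk, y, hy, heq⟩
    obtain ⟨i, hi⟩ := hv k hk
    have hyi := hy i
    have h2 := congrFun heq i
    simp only [Pi.add_apply, hz] at h2
    linarith
  obtain ⟨f, u0, hfu, huz⟩ := geometric_hahn_banach_closed_point hCcv hCcl hzC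
  set lam' : n → ℝ := fun i => f fun j => if i = j then 1 else 0 with hlam'
  have hf_eq : ∀ x : n → ℝ, f x = ∑ i, x i * lam' i := by
    intro x
    have := LinearMap.pi_apply_eq_sum_univ (f : (n → ℝ) →ₗ[ℝ] ℝ) x
    simpa [hlam', smul_eq_mul] using this
  have hKC : ∀ k ∈ K, k ∈ C := by
    intro k hk
    exact ⟨k, hk, 0, fun i => le_refl 0, by simp⟩
  have hfk0 : f k0 < u0 := hfu _ (hKC _ hk0)
  have hlampos : ∀ i, 0 ≤ lam' i := by
    intro i0
    by_contra hneg
    push_neg at hneg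
    set c : ℝ := (f k0 - u0) / lam' i0 with hc
    have hcpos : 0 < c := div_pos_of_neg_of_neg (by linarith) hneg
    have hmem : k0 + (-c) • (fun j => if i0 = j then (1:ℝ) else 0 : n → ℝ) ∈ C := by
      refine ⟨k0, hk0, _, ?_, rfl⟩
      intro i
      simp only [Pi.smul_apply, smul_eq_mul]
      split <;> nlinarith
    have hmem' := hfu _ hmem
    rw [map_add, map_smul] at hmem'
    simp only [smul_eq_mul, ← hlam'] at hmem'
    have hcl : c * lam' i0 = f k0 - u0 := by
      rw [hc, div_mul_cancel₀ _ hneg.ne]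
    linarith
  set S := ∑ i, lam' i with hS
  have hfz : f z = (v + ε) * S := by
    rw [hf_eq, hS, Finset.mul_sum]
  have hSpos : 0 < S := by
    rw [hS]
    rcases (Finset.sum_nonneg fun i _ => hlampos i).lt_or_eq with h | h
    · exact h
    · exfalso
      have hall : ∀ i ∈ Finset.univ, lam' i = 0 :=
        (Finset.sum_eq_zero_iff_of_nonneg fun i _ => hlampos i).mp h.symm
      have h1 : f z = 0 := by
        rw [hf_eq]
        exact Finset.sum_eq_zero fun i hi => by rw [hall i hi, mul_zero]
      have h2 : f k0 = 0 := by
        rw [hf_eq]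
        exact Finset.sum_eq_zero fun i hi => by rw [hall i hi, mul_zero]
      linarith [hfk0, huz, h1, h2]
  refine ⟨fun i => lam' i / S, fun i => div_nonneg (hlampos i) hSpos.le, ?_, ?_⟩
  · rw [← Finset.sum_div]; field_simp; exact hS.symm
  · intro k hk
    have h1 : f k < u0 := hfu _ (hKC _ hk)
    have h2 : u0 < (v + ε) * S := hfz ▸ huz
    have h3 : ∑ i, lam' i / S * k i = (f k) / S := by
      rw [hf_eq, Finset.sum_div]
      exact Finset.sum_congr rfl fun i _ => by ring
    rw [h3]
    rw [div_le_iff₀ hSpos]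
    nlinarith

lemma payoffG_nonneg (src dst : E → V) (s t : V) (μ : Finset E) (x : List E → ℝ)
    (hx : ∀ p, 0 ≤ x p) : 0 ≤ payoffG src dst s t μ x :=
  Finset.sum_nonneg fun p _ => mul_nonneg (le_max_left _ _) (hx p)

lemma payoffG_zero (src dst : E → V) (s t : V) (μ : Finset E) :
    payoffG src dst s t μ (0 : List E → ℝ) = 0 := by
  simp [payoffG]

lemma payoffG_add (src dst : E → V) (s t : V) (μ : Finset E) (x y : List E → ℝ) :
    payoffG src dst s t μ (x + y) = payoffG src dst s t μ x + payoffG src dst s t μ y := by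
  simp only [payoffG, Pi.add_apply, mul_add, Finset.sum_add_distrib]

lemma payoffG_smul (src dst : E → V) (s t : V) (μ : Finset E) (c : ℝ) (x : List E → ℝ) :
    payoffG src dst s t μ (c • x) = c * payoffG src dst s t μ x := by
  simp only [payoffG, Pi.smul_apply, smul_eq_mul, Finset.mul_sum]
  exact Finset.sum_congr rfl fun p _ => by ring

lemma isPathFlow_zero (src dst : E → V) (s t : V) (u : E → ℝ) (hu : ∀ e, 0 ≤ u e) :
    IsPathFlow src dst s t u (0 : List E → ℝ) := by
  refine ⟨fun p => le_refl 0, fun p _ => rfl, fun e => ?_⟩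
  simp [hu e]

lemma pathflow_le {u : E → ℝ} {src dst : E → V} {s t : V} {x : List E → ℝ} {p : List E}
    (hx : IsPathFlow src dst s t u x) (hp : p ∈ stPaths src dst s t) {M : ℝ}
    (hM : ∀ e, u e ≤ M) : x p ≤ M := by
  have hsp : IsSTPath src dst s t p := by
    simp only [stPaths, Finset.mem_filter] at hp; exact hp.2
  obtain ⟨e0, l', hpe⟩ := List.exists_cons_of_ne_nil hsp.1
  have he0 : e0 ∈ p := by rw [hpe]; exact List.mem_cons_self
  calc x p = if e0 ∈ p then x p else 0 := (if_pos he0).symm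
    _ ≤ ∑ q ∈ stPaths src dst s t, if e0 ∈ q then x q else 0 :=
        Finset.single_le_sum (f := fun q => if e0 ∈ q then x q else 0)
          (fun q _ => by split_ifs with h; exacts [hx.1 q, le_refl 0]) hp
    _ ≤ u e0 := hx.2.2 e0
    _ ≤ M := hM e0

lemma payoffG_le {u : E → ℝ} {src dst : E → V} {s t : V} {x : List E → ℝ} {μ : Finset E}
    (hx : IsPathFlow src dst s t u x) {M : ℝ} (hM : ∀ e, u e ≤ M) :
    payoffG src dst s t μ x ≤ ((stPaths src dst s t).card : ℝ) * M := by
  have h1 : payoffG src dst s t μ x ≤ ∑ p ∈ stPaths src dst s t, x p := by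
    refine Finset.sum_le_sum fun p hp => ?_
    have hc : max 0 (1 - ((p.countP fun e => decide (e ∈ μ)) : ℝ)) ≤ 1 := by
      apply max_le (by norm_num)
      have : (0:ℝ) ≤ ((p.countP fun e => decide (e ∈ μ)) : ℝ) := Nat.cast_nonneg _
      linarith
    exact mul_le_of_le_one_left (hx.1 p) hc
  have h2 : ∑ p ∈ stPaths src dst s t, x p ≤ ∑ _p ∈ stPaths src dst s t, M :=
    Finset.sum_le_sum fun p hp => pathflow_le hx hp hM
  calc payoffG src dst s t μ x ≤ ∑ _p ∈ stPaths src dst s t, M := h1.trans h2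
    _ = ((stPaths src dst s t).card : ℝ) * M := by rw [Finset.sum_const, nsmul_eq_mul]

lemma pathFlow_convex (src dst : E → V) (s t : V) (u : E → ℝ) :
    Convex ℝ {x : List E → ℝ | IsPathFlow src dst s t u x} := by
  rintro x hx y hy a b ha hb hab
  refine ⟨fun p => ?_, fun p hp => ?_, fun e => ?_⟩
  · simp only [Pi.add_apply, Pi.smul_apply, smul_eq_mul]
    exact add_nonneg (mul_nonneg ha (hx.1 p)) (mul_nonneg hb (hy.1 p))
  · simp [Pi.add_apply, Pi.smul_apply, hx.2.1 p hp, hy.2.1 p hp]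
  · have heq : (∑ q ∈ stPaths src dst s t, if e ∈ q then (a • x + b • y) q else 0)
        = a * (∑ q ∈ stPaths src dst s t, if e ∈ q then x q else 0)
          + b * (∑ q ∈ stPaths src dst s t, if e ∈ q then y q else 0) := by
      rw [Finset.mul_sum, Finset.mul_sum, ← Finset.sum_add_distrib]
      refine Finset.sum_congr rfl fun q _ => ?_
      simp only [Pi.add_apply, Pi.smul_apply, smul_eq_mul]
      split_ifs <;> ring
    rw [heq]
    have h1 := hx.2.2 e
    have h2 := hy.2.2 e
    have h3 := mul_le_mul_of_nonneg_left h1 ha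
    have h4 := mul_le_mul_of_nonneg_left h2 hb
    have h5 : a * u e + b * u e = u e := by rw [← add_mul, hab, one_mul]
    linarith

lemma pathFlow_compact (src dst : E → V) (s t : V) (u : E → ℝ) {M : ℝ}
    (hM : ∀ e, u e ≤ M) (hM0 : 0 ≤ M) :
    IsCompact {x : List E → ℝ | IsPathFlow src dst s t u x} := by
  classical
  refine IsCompact.of_isClosed_subset
    (isCompact_univ_pi fun p : List E =>
      isCompact_Icc (a := (0:ℝ)) (b := if p ∈ stPaths src dst s t then M else 0)) ?_ ?_
  · have h1 : IsClosed {x : List E → ℝ | ∀ p, 0 ≤ x p} := by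
      have : {x : List E → ℝ | ∀ p, 0 ≤ x p} = ⋂ p, {x : List E → ℝ | 0 ≤ x p} := by
        ext; simp
      rw [this]
      exact isClosed_iInter fun p => isClosed_le continuous_const (continuous_apply p)
    have h2 : IsClosed {x : List E → ℝ | ∀ p, p ∉ stPaths src dst s t → x p = 0} := by
      have : {x : List E → ℝ | ∀ p, p ∉ stPaths src dst s t → x p = 0}
          = ⋂ p, {x : List E → ℝ | p ∉ stPaths src dst s t → x p = 0} := by ext; simp
      rw [this]
      refine isClosed_iInter fun p => ?_
      by_cases hp : p ∈ stPaths src dst s t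
      · have : {x : List E → ℝ | p ∉ stPaths src dst s t → x p = 0} = Set.univ := by
          ext; simp [hp]
        rw [this]; exact isClosed_univ
      · have : {x : List E → ℝ | p ∉ stPaths src dst s t → x p = 0}
            = {x : List E → ℝ | x p = 0} := by ext; simp [hp]
        rw [this]; exact isClosed_eq (continuous_apply p) continuous_const
    have h3 : IsClosed {x : List E → ℝ |
        ∀ e, (∑ p ∈ stPaths src dst s t, if e ∈ p then x p else 0) ≤ u e} := by
      have : {x : List E → ℝ |
            ∀ e, (∑ p ∈ stPaths src dst s t, if e ∈ p then x p else 0) ≤ u e}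
          = ⋂ e, {x : List E → ℝ |
            (∑ p ∈ stPaths src dst s t, if e ∈ p then x p else 0) ≤ u e} := by ext; simp
      rw [this]
      refine isClosed_iInter fun e => ?_
      refine isClosed_le (continuous_finset_sum _ fun p _ => ?_) continuous_const
      by_cases h : e ∈ p
      · simpa [h] using continuous_apply p
      · simp only [h, if_false]; exact continuous_const
    have hset : {x : List E → ℝ | IsPathFlow src dst s t u x}
        = ({x : List E → ℝ | ∀ p, 0 ≤ x p}
          ∩ {x : List E → ℝ | ∀ p, p ∉ stPaths src dst s t → x p = 0})
          ∩ {x : List E → ℝ |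
            ∀ e, (∑ p ∈ stPaths src dst s t, if e ∈ p then x p else 0) ≤ u e} := by
      ext x
      simp only [Set.mem_setOf_eq, Set.mem_inter_iff, IsPathFlow]
      tauto
    rw [hset]
    exact (h1.inter h2).inter h3
  · intro x hx
    intro p _
    refine ⟨hx.1 p, ?_⟩
    split_ifs with h
    · exact pathflow_le hx h hM
    · exact le_of_eq (hx.2.1 p h)

/-- `Z_RNI^Path = Z_ADP^Path`. -/
theorem Z_RNIPath_eq_Z_ADPPath (src dst : E → V) (s t : V) (u : E → ℝ) (Γ : ℕ)
    (hnet : IsNetwork src dst s t u) (hΓ1 : 1 ≤ Γ) (hΓE : Γ ≤ Fintype.card E) :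
    Z_RNIPath src dst s t u Γ = Z_ADPPath src dst s t u Γ := by
  classical
  have hu : ∀ e, 0 ≤ u e := hnet.2.2.2
  -- a nonempty scenario set
  obtain ⟨μ0, _, hμ0card⟩ :=
    Finset.exists_subset_card_eq (s := (Finset.univ : Finset E)) (n := Γ)
      (by simpa using hΓE)
  have hμ0 : μ0 ∈ Scenarios E Γ := by
    simp [Scenarios, hμ0card]
  haveI hι : Nonempty {μ // μ ∈ Scenarios E Γ} := ⟨⟨μ0, hμ0⟩⟩
  -- bounds
  set M : ℝ := ∑ e, u e with hMdef
  have hM : ∀ e, u e ≤ M := fun e =>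
    Finset.single_le_sum (fun e _ => hu e) (Finset.mem_univ e)
  have hM0 : 0 ≤ M := Finset.sum_nonneg fun e _ => hu e
  set B : ℝ := ((stPaths src dst s t).card : ℝ) * M with hBdef
  have hx0 : IsPathFlow src dst s t u (0 : List E → ℝ) := isPathFlow_zero src dst s t u hu
  -- the inner scenario-minimization sets
  set wset : (List E → ℝ) → Set ℝ :=
    fun x => {w | ∃ μ ∈ Scenarios E Γ, w = payoffG src dst s t μ x} with hwset
  have hwfin : ∀ x, (wset x).Finite := by
    intro x
    have : wset x = (fun μ => payoffG src dst s t μ x) '' ↑(Scenarios E Γ) := by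
      ext w; simp [hwset, eq_comm]
    rw [this]
    exact ((Scenarios E Γ).finite_toSet).image _
  have hwne : ∀ x, (wset x).Nonempty := fun x => ⟨_, μ0, hμ0, rfl⟩
  -- ADP set
  set ADP : Set ℝ := {z | ∃ xP : List E → ℝ, IsPathFlow src dst s t u xP ∧
      z = sInf (wset xP)} with hADPdef
  have hADPne : ADP.Nonempty := ⟨sInf (wset 0), 0, hx0, rfl⟩
  have hADPbdd : BddAbove ADP := by
    refine ⟨B, ?_⟩
    rintro z ⟨x, hx, rfl⟩
    calc sInf (wset x) ≤ payoffG src dst s t μ0 x :=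
          csInf_le (hwfin x).bddBelow ⟨μ0, hμ0, rfl⟩
      _ ≤ B := payoffG_le hx hM
  set v : ℝ := sSup ADP with hvdef
  have hZADP : Z_ADPPath src dst s t u Γ = v := rfl
  -- inner sets for distributions
  set vset : (Finset E → ℝ) → Set ℝ := fun α => {w | ∃ xP : List E → ℝ,
      IsPathFlow src dst s t u xP ∧
      w = ∑ μ ∈ Scenarios E Γ, α μ * payoffG src dst s t μ xP} with hvsetdef
  have hvset0 : ∀ α : Finset E → ℝ, (0:ℝ) ∈ vset α := by
    intro α
    refine ⟨0, hx0, ?_⟩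
    rw [Finset.sum_eq_zero]
    intro μ _
    rw [payoffG_zero, mul_zero]
  have hvsetbdd : ∀ α : Finset E → ℝ, IsDist E Γ α → ∀ w ∈ vset α, w ≤ B := by
    rintro α hα w ⟨x, hx, rfl⟩
    calc ∑ μ ∈ Scenarios E Γ, α μ * payoffG src dst s t μ x
        ≤ ∑ μ ∈ Scenarios E Γ, α μ * B := by
          refine Finset.sum_le_sum fun μ _ => ?_
          exact mul_le_mul_of_nonneg_left (payoffG_le hx hM) (hα.1 μ)
      _ = B := by rw [← Finset.sum_mul, hα.2.2, one_mul]
  set RNI : Set ℝ := {z | ∃ α : Finset E → ℝ, IsDist E Γ α ∧ z = sSup (vset α)} with hRNIdef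
  have hZRNI : Z_RNIPath src dst s t u Γ = sInf RNI := rfl
  -- a uniform distribution, so RNI is nonempty
  have hcardpos : (0:ℝ) < ((Scenarios E Γ).card : ℝ) := by
    have : 0 < (Scenarios E Γ).card := Finset.card_pos.mpr ⟨μ0, hμ0⟩
    exact_mod_cast this
  have hRNIne : RNI.Nonempty := by
    refine ⟨_, fun μ => if μ ∈ Scenarios E Γ then (((Scenarios E Γ).card : ℝ))⁻¹ else 0,
      ⟨?_, ?_, ?_⟩, rfl⟩
    · intro μ; dsimp only; split
      · positivity
      · exact le_refl 0
    · intro μ h; dsimp only; rw [if_neg h]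
    · dsimp only
      rw [Finset.sum_congr rfl fun μ hμ => if_pos hμ, Finset.sum_const, nsmul_eq_mul,
        mul_inv_cancel₀ hcardpos.ne']
  have hRNIbdd : BddBelow RNI := by
    refine ⟨0, ?_⟩
    rintro z ⟨α, hα, rfl⟩
    refine le_csSup ⟨B, ?_⟩ (hvset0 α)
    intro w hw; exact hvsetbdd α hα w hw
  -- Direction 1 : Z_ADP ≤ Z_RNI
  have hdir1 : v ≤ sInf RNI := by
    refine le_csInf hRNIne ?_
    rintro z ⟨α, hα, rfl⟩
    refine csSup_le hADPne ?_
    rintro w ⟨x, hx, rfl⟩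
    have h2 : sInf (wset x) ≤ ∑ μ ∈ Scenarios E Γ, α μ * payoffG src dst s t μ x := by
      calc sInf (wset x) = ∑ μ ∈ Scenarios E Γ, α μ * sInf (wset x) := by
            rw [← Finset.sum_mul, hα.2.2, one_mul]
        _ ≤ ∑ μ ∈ Scenarios E Γ, α μ * payoffG src dst s t μ x := by
            refine Finset.sum_le_sum fun μ hμ => ?_
            exact mul_le_mul_of_nonneg_left
              (csInf_le (hwfin x).bddBelow ⟨μ, hμ, rfl⟩) (hα.1 μ)
    refine h2.trans (le_csSup ⟨B, ?_⟩ ⟨x, hx, rfl⟩)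
    intro w hw; exact hvsetbdd α hα w hw
  -- Direction 2 : Z_RNI ≤ Z_ADP + ε for every ε > 0
  have hdir2 : ∀ ε : ℝ, 0 < ε → sInf RNI ≤ v + ε := by
    intro ε hε
    set G : (List E → ℝ) → ({μ // μ ∈ Scenarios E Γ} → ℝ) :=
      fun x i => payoffG src dst s t i.1 x with hGdef
    set X : Set (List E → ℝ) := {x | IsPathFlow src dst s t u x} with hXdef
    set K : Set ({μ // μ ∈ Scenarios E Γ} → ℝ) := G '' X with hKdef
    have hKc : IsCompact K := by
      refine (pathFlow_compact src dst s t u hM hM0).image ?_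
      exact continuous_pi fun i => continuous_finset_sum _ fun p _ =>
        continuous_const.mul (continuous_apply p)
    have hKcv : Convex ℝ K := by
      refine (pathFlow_convex src dst s t u).is_linear_image ⟨?_, ?_⟩
      · intro x y
        funext i
        simp only [hGdef, Pi.add_apply]
        exact payoffG_add src dst s t i.1 x y
      · intro c x
        funext i
        simp only [hGdef, Pi.smul_apply, smul_eq_mul]
        exact payoffG_smul src dst s t i.1 c x
    have hvK : ∀ k ∈ K, ∃ i, k i ≤ v := by
      rintro k ⟨x, hx, rfl⟩
      obtain ⟨μ1, hμ1, heq⟩ := (hwne x).csInf_mem (hwfin x)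
      refine ⟨⟨μ1, hμ1⟩, ?_⟩
      have hle : sInf (wset x) ≤ v := le_csSup hADPbdd ⟨x, hx, rfl⟩
      have : G x ⟨μ1, hμ1⟩ = sInf (wset x) := heq.symm
      rw [this]
      exact hle
    obtain ⟨lam, hlam0, hlam1, hlamle⟩ := minimax_aux K hKc hKcv v ε hε hvK
    set α : Finset E → ℝ := fun μ =>
      if h : μ ∈ Scenarios E Γ then lam ⟨μ, h⟩ else 0 with hαdef
    have hsum_eq : ∀ x : List E → ℝ,
        ∑ μ ∈ Scenarios E Γ, α μ * payoffG src dst s t μ x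
          = ∑ i : {μ // μ ∈ Scenarios E Γ}, lam i * G x i := by
      intro x
      rw [← Finset.sum_attach (Scenarios E Γ) (fun μ => α μ * payoffG src dst s t μ x),
        ← Finset.univ_eq_attach]
      refine Finset.sum_congr rfl fun i _ => ?_
      simp only [hαdef, dif_pos i.2, Subtype.coe_eta, hGdef]
    have hαdist : IsDist E Γ α := by
      refine ⟨?_, ?_, ?_⟩
      · intro μ
        simp only [hαdef]
        split
        · exact hlam0 _
        · exact le_refl 0
      · intro μ h; exact dif_neg h
      · rw [← hlam1, ← Finset.sum_attach (Scenarios E Γ) α, ← Finset.univ_eq_attach]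
        refine Finset.sum_congr rfl fun i _ => ?_
        simp only [hαdef, dif_pos i.2, Subtype.coe_eta]
    have hαval : sSup (vset α) ≤ v + ε := by
      refine csSup_le ⟨0, hvset0 α⟩ ?_
      rintro w ⟨x, hx, rfl⟩
      rw [hsum_eq x]
      exact hlamle (G x) ⟨x, hx, rfl⟩
    exact (csInf_le hRNIbdd ⟨α, hαdist, rfl⟩).trans hαval
  have hdir2' : sInf RNI ≤ v := by
    by_contra h
    push_neg at h
    have := hdir2 ((sInf RNI - v) / 2) (by linarith)
    linarith
  rw [hZRNI, hZADP]
  exact le_antisymm hdir2' hdir1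

end NetworkInterdiction
end

section
/- Let (x*,θ*) be an optimal solution of the LO model, i.e., x* is an s-t-flow with x*_e ≤ θ* for all e and Val(x*) − Γ·θ* = Z_LO. Then for every path decomposition (x*_P)_{P∈P} of x* (nonnegative values on s-t-paths with Σ_{P: e∈P} x*_P ≤ x*_e for every arc e and Σ_{P∈P} x*_P = Val(x*)), one has Val(x*) − Γ·θ* ≤ min_{μ∈Ω} g(μ, (x*_P)). -/
open scoped BigOperators

section NetworkInterdiction

variable {V E : Type} [Fintype V] [Fintype E] [DecidableEq V] [DecidableEq E]

lemma countP_mem_eq_sum {E : Type} [DecidableEq E] (p : List E) (hp : p.Nodup)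
    (μ : Finset E) :
    (p.countP fun e => decide (e ∈ μ)) = ∑ e ∈ μ, (if e ∈ p then 1 else 0) := by
  rw [List.countP_eq_length_filter]
  have h1 : (p.filter fun e => decide (e ∈ μ)).length
      = (p.filter fun e => decide (e ∈ μ)).toFinset.card :=
    (List.toFinset_card_of_nodup (hp.filter _)).symm
  rw [h1,
    show (p.filter fun e => decide (e ∈ μ)).toFinset = μ.filter (fun e => e ∈ p) from by
      ext e; simp [List.mem_filter]; tauto,
    Finset.card_filter]

lemma mem_stPaths_nodup {V E : Type} [Fintype V] [Fintype E] [DecidableEq V] [DecidableEq E]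
    (src dst : E → V) (s t : V) (p : List E) (hp : p ∈ stPaths src dst s t) : p.Nodup := by
  unfold stPaths at hp
  have := @Finset.mem_of_mem_filter _ (IsSTPath src dst s t) (Classical.decPred _) _ p hp
  obtain ⟨l, _, rfl⟩ := Finset.mem_image.mp this
  exact l.2

/-- for an optimal LO solution `(x*,θ*)` and any path decomposition
`(x*_P)` of `x*`, one has `Val(x*) - Γ·θ* ≤ min_{μ∈Ω} g(μ,(x*_P))`. -/
theorem Z_LO_le_path_payoff (src dst : E → V) (s t : V) (u : E → ℝ) (Γ : ℕ)
    (hnet : IsNetwork src dst s t u) (hΓ1 : 1 ≤ Γ) (hΓE : Γ ≤ Fintype.card E)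
    (x : E → ℝ) (θ : ℝ) (hopt : IsLOOptimal src dst s t u Γ x θ)
    (xP : List E → ℝ) (hP0 : ∀ p, 0 ≤ xP p)
    (hPsupp : ∀ p, p ∉ stPaths src dst s t → xP p = 0)
    (hPle : ∀ e : E, (∑ p ∈ stPaths src dst s t, if e ∈ p then xP p else 0) ≤ x e)
    (hPval : ∑ p ∈ stPaths src dst s t, xP p = flowVal dst t x) :
    ∀ μ ∈ Scenarios E Γ, flowVal dst t x - Γ * θ ≤ payoffG src dst s t μ xP := by
  intro μ hμ
  have hΓcard : μ.card = Γ := (Finset.mem_filter.mp hμ).2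
  obtain ⟨hflow, hθ0, hxθ, _⟩ := hopt
  set S := stPaths src dst s t with hS
  have key : ∑ p ∈ S, ((p.countP fun e => decide (e ∈ μ)) : ℝ) * xP p ≤ Γ * θ := by
    have h1 : ∀ p ∈ S, ((p.countP fun e => decide (e ∈ μ)) : ℝ) * xP p
        = ∑ e ∈ μ, (if e ∈ p then xP p else 0) := by
      intro p hp
      rw [countP_mem_eq_sum p (mem_stPaths_nodup src dst s t p hp) μ]
      push_cast
      rw [Finset.sum_mul]
      exact Finset.sum_congr rfl fun e _ => by split <;> simp
    rw [Finset.sum_congr rfl h1, Finset.sum_comm]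
    calc ∑ e ∈ μ, ∑ p ∈ S, (if e ∈ p then xP p else 0)
        ≤ ∑ e ∈ μ, θ :=
          Finset.sum_le_sum fun e _ => (hPle e).trans (hxθ e)
      _ = Γ * θ := by rw [Finset.sum_const, hΓcard]; simp [mul_comm]
  have h2 : flowVal dst t x - Γ * θ
      ≤ ∑ p ∈ S, (1 - ((p.countP fun e => decide (e ∈ μ)) : ℝ)) * xP p := by
    have : ∑ p ∈ S, (1 - ((p.countP fun e => decide (e ∈ μ)) : ℝ)) * xP p
        = ∑ p ∈ S, xP p - ∑ p ∈ S, ((p.countP fun e => decide (e ∈ μ)) : ℝ) * xP p := by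
      rw [← Finset.sum_sub_distrib]
      exact Finset.sum_congr rfl fun p _ => by ring
    rw [this, hPval]
    linarith
  refine h2.trans ?_
  unfold payoffG
  exact Finset.sum_le_sum fun p _ =>
    mul_le_mul_of_nonneg_right (le_max_right _ _) (hP0 p)

end NetworkInterdiction
end

section
/- Let (x*,θ*) be an optimal solution of the LO model for which θ* is maximal among all optimal solutions. Then there exists an s-t-cut S'' such that Val(x*) = Cap(S'',θ*) and |B(S'',θ*)| < Γ, where B(S'',θ*) is the set of arcs e in δ+(S'') with θ* < u_e. -/
open scoped BigOperators

section NetworkInterdiction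

variable {V E : Type} [Fintype V] [Fintype E] [DecidableEq V] [DecidableEq E]

/-! ### Auxiliary development for Statement 8 -/

section AuxProof8

lemma auxIfComm {a w : V} {ε : ℝ} : (if a = w then ε else 0) = (if w = a then ε else 0) := by
  by_cases h : w = a
  · simp [h]
  · rw [if_neg (fun hh => h hh.symm), if_neg h]

/-- Flow across a cut equals the flow value. -/
lemma auxFlowValCut (src dst : E → V) (s t : V) (x : E → ℝ)
    (hts : ∀ e, src e ≠ t)
    (hcons : Conserves src dst s t x) (S : Finset V) (hsS : s ∈ S) (htS : t ∉ S) :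
    flowVal dst t x = (∑ e ∈ cutArcs src dst S, x e)
      - ∑ e ∈ Finset.univ.filter (fun e => dst e ∈ S ∧ src e ∉ S), x e := by
  have hsum_src : ∀ T : Finset V, (∑ v ∈ T, ∑ e, (if src e = v then x e else 0))
      = ∑ e, if src e ∈ T then x e else 0 := by
    intro T
    rw [Finset.sum_comm]
    exact Finset.sum_congr rfl fun e _ => Finset.sum_ite_eq T (src e) fun _ => x e
  have hsum_dst : ∀ T : Finset V, (∑ v ∈ T, ∑ e, (if dst e = v then x e else 0))
      = ∑ e, if dst e ∈ T then x e else 0 := by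
    intro T
    rw [Finset.sum_comm]
    exact Finset.sum_congr rfl fun e _ => Finset.sum_ite_eq T (dst e) fun _ => x e
  have hcompl : (∑ v ∈ Sᶜ, ((∑ e, if src e = v then x e else 0) - (∑ e, if dst e = v then x e else 0)))
      = - flowVal dst t x := by
    have htc : t ∈ Sᶜ := Finset.mem_compl.2 htS
    rw [← Finset.add_sum_erase _ _ htc]
    have h1 : (∑ e, if src e = t then x e else 0) = 0 :=
      Finset.sum_eq_zero fun e _ => by simp [hts e]
    have h2 : (∑ v ∈ (Sᶜ).erase t, ((∑ e, if src e = v then x e else 0) - (∑ e, if dst e = v then x e else 0))) = 0 := by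
      apply Finset.sum_eq_zero
      intro v hv
      have hvt : v ≠ t := (Finset.mem_erase.1 hv).1
      have hvs : v ≠ s := by
        intro h; subst h
        exact (Finset.mem_compl.1 (Finset.mem_erase.1 hv).2) hsS
      rw [hcons v hvs hvt]; ring
    rw [h2, h1, flowVal]; ring
  have htotal : (∑ v : V, ((∑ e, if src e = v then x e else 0) - (∑ e, if dst e = v then x e else 0))) = 0 := by
    rw [Finset.sum_sub_distrib, hsum_src Finset.univ, hsum_dst Finset.univ]
    simp
  have hsplit := Finset.sum_add_sum_compl S
    (fun v => ((∑ e, if src e = v then x e else 0) - (∑ e, if dst e = v then x e else 0)))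
  have hS : (∑ v ∈ S, ((∑ e, if src e = v then x e else 0) - (∑ e, if dst e = v then x e else 0)))
      = flowVal dst t x := by linarith
  rw [Finset.sum_sub_distrib, hsum_src S, hsum_dst S] at hS
  have hsplit2 : (∑ e, if src e ∈ S then x e else 0) - (∑ e, if dst e ∈ S then x e else 0)
      = (∑ e, if src e ∈ S ∧ dst e ∉ S then x e else 0)
        - (∑ e, if dst e ∈ S ∧ src e ∉ S then x e else 0) := by
    rw [← Finset.sum_sub_distrib, ← Finset.sum_sub_distrib]
    refine Finset.sum_congr rfl fun e _ => ?_
    by_cases h1 : src e ∈ S <;> by_cases h2 : dst e ∈ S <;> simp [h1, h2]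
  rw [hsplit2] at hS
  rw [← hS, cutArcs, Finset.sum_filter, Finset.sum_filter]

/-- The residual relation of a flow `x` with capacities `c`. -/
def auxResid (src dst : E → V) (c x : E → ℝ) (a b : V) : Prop :=
  ∃ e, (src e = a ∧ dst e = b ∧ x e < c e) ∨ (dst e = a ∧ src e = b ∧ 0 < x e)

set_option maxHeartbeats 1000000 in
lemma auxAugment (src dst : E → V) (t : V) (c x : E → ℝ)
    (hx0 : ∀ e, 0 ≤ x e) (hxc : ∀ e, x e ≤ c e) :
    ∀ v, Relation.ReflTransGen (auxResid src dst c x) v t →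
    ∃ K : ℝ, 0 ≤ K ∧ ∃ δ : ℝ, 0 < δ ∧ ∀ ε : ℝ, 0 < ε → ε ≤ δ → ∃ x' : E → ℝ,
      (∀ e, 0 ≤ x' e) ∧ (∀ e, x' e ≤ c e) ∧ (∀ e, |x' e - x e| ≤ K * ε) ∧
      ∀ w : V, (∑ e, if src e = w then x' e else 0) - (∑ e, if dst e = w then x' e else 0)
        = ((∑ e, if src e = w then x e else 0) - (∑ e, if dst e = w then x e else 0))
          + (if w = v then ε else 0) - (if w = t then ε else 0) := by
  intro v hv
  induction hv using Relation.ReflTransGen.head_induction_on with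
  | refl =>
    refine ⟨0, le_refl 0, 1, one_pos, fun ε hε hε1 => ⟨x, hx0, hxc, fun e => by simp, fun w => by ring⟩⟩
  | @head a b hstep hrest ih =>
    obtain ⟨K, hK0, δ, hδ, hIH⟩ := ih
    have hK1 : (0:ℝ) < K + 1 := by linarith
    obtain ⟨e₀, he₀⟩ := hstep
    rcases he₀ with ⟨hsrc, hdst, hlt⟩ | ⟨hdst, hsrc, hpos⟩
    · -- forward arc e₀ : a → b with x e₀ < c e₀
      refine ⟨K + 1, by linarith, min δ ((c e₀ - x e₀) / (2 * (K + 1))), ?_, ?_⟩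
      · exact lt_min hδ (div_pos (by linarith) (by linarith))
      intro ε hε hεδ
      obtain ⟨x'', h0, hcle, hKb, hD⟩ := hIH ε hε (le_trans hεδ (min_le_left _ _))
      have hε2 : ε ≤ (c e₀ - x e₀) / (2 * (K + 1)) := le_trans hεδ (min_le_right _ _)
      have hKε : (K + 1) * ε ≤ (c e₀ - x e₀) / 2 := by
        rw [le_div_iff₀ (by linarith : (0:ℝ) < 2 * (K + 1))] at hε2
        linarith
      have habs := fun e => abs_le.1 (hKb e)
      refine ⟨fun e => x'' e + if e = e₀ then ε else 0, ?_, ?_, ?_, ?_⟩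
      · intro e
        show 0 ≤ x'' e + if e = e₀ then ε else 0
        have := h0 e; split_ifs <;> linarith
      · intro e
        show x'' e + (if e = e₀ then ε else 0) ≤ c e
        split_ifs with h
        · have h2 := (habs e₀).2
          rw [h]
          have := hxc e₀
          linarith
        · have := hcle e; linarith
      · intro e
        show |x'' e + (if e = e₀ then ε else 0) - x e| ≤ (K + 1) * ε
        split_ifs with h
        · subst h
          calc |x'' e + ε - x e| = |(x'' e - x e) + ε| := by ring_nf
            _ ≤ |x'' e - x e| + |ε| := abs_add_le _ _
            _ ≤ K * ε + ε := by have := hKb e; rw [abs_of_pos hε]; linarith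
            _ = (K + 1) * ε := by ring
        · rw [add_zero]
          have := hKb e; nlinarith
      · intro w
        have hs1 : (∑ e, if src e = w then (x'' e + if e = e₀ then ε else 0) else 0)
            = (∑ e, if src e = w then x'' e else 0) + (if src e₀ = w then ε else 0) := by
          have hpt : ∀ e, (if src e = w then (x'' e + if e = e₀ then ε else 0) else 0)
              = (if src e = w then x'' e else 0) + (if e = e₀ then (if src e₀ = w then ε else 0) else 0) := by
            intro e
            by_cases h2 : e = e₀
            · subst h2; by_cases h1 : src e = w <;> simp [h1]
            · by_cases h1 : src e = w <;> simp [h1, h2]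
          rw [Finset.sum_congr rfl fun e _ => hpt e, Finset.sum_add_distrib,
            Finset.sum_ite_eq' Finset.univ e₀ fun _ => (if src e₀ = w then ε else 0)]
          simp
        have hd1 : (∑ e, if dst e = w then (x'' e + if e = e₀ then ε else 0) else 0)
            = (∑ e, if dst e = w then x'' e else 0) + (if dst e₀ = w then ε else 0) := by
          have hpt : ∀ e, (if dst e = w then (x'' e + if e = e₀ then ε else 0) else 0)
              = (if dst e = w then x'' e else 0) + (if e = e₀ then (if dst e₀ = w then ε else 0) else 0) := by
            intro e
            by_cases h2 : e = e₀
            · subst h2; by_cases h1 : dst e = w <;> simp [h1]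
            · by_cases h1 : dst e = w <;> simp [h1, h2]
          rw [Finset.sum_congr rfl fun e _ => hpt e, Finset.sum_add_distrib,
            Finset.sum_ite_eq' Finset.univ e₀ fun _ => (if dst e₀ = w then ε else 0)]
          simp
        show (∑ e, if src e = w then (x'' e + if e = e₀ then ε else 0) else 0)
            - (∑ e, if dst e = w then (x'' e + if e = e₀ then ε else 0) else 0) = _
        rw [hs1, hd1, hsrc, hdst, auxIfComm (a := a) (w := w), auxIfComm (a := b) (w := w)]
        have hDw := hD w
        split_ifs at hDw ⊢ <;> linarith
    · -- backward arc e₀ : b → a with 0 < x e₀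
      refine ⟨K + 1, by linarith, min δ (x e₀ / (2 * (K + 1))), ?_, ?_⟩
      · exact lt_min hδ (div_pos hpos (by linarith))
      intro ε hε hεδ
      obtain ⟨x'', h0, hcle, hKb, hD⟩ := hIH ε hε (le_trans hεδ (min_le_left _ _))
      have hε2 : ε ≤ x e₀ / (2 * (K + 1)) := le_trans hεδ (min_le_right _ _)
      have hKε : (K + 1) * ε ≤ x e₀ / 2 := by
        rw [le_div_iff₀ (by linarith : (0:ℝ) < 2 * (K + 1))] at hε2
        linarith
      have habs := fun e => abs_le.1 (hKb e)
      refine ⟨fun e => x'' e - if e = e₀ then ε else 0, ?_, ?_, ?_, ?_⟩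
      · intro e
        show 0 ≤ x'' e - if e = e₀ then ε else 0
        split_ifs with h
        · have h1 := (habs e₀).1
          rw [h]
          linarith
        · have := h0 e; linarith
      · intro e
        show x'' e - (if e = e₀ then ε else 0) ≤ c e
        have := hcle e; split_ifs <;> linarith
      · intro e
        show |x'' e - (if e = e₀ then ε else 0) - x e| ≤ (K + 1) * ε
        split_ifs with h
        · subst h
          calc |x'' e - ε - x e| = |(x'' e - x e) + (-ε)| := by ring_nf
            _ ≤ |x'' e - x e| + |(-ε)| := abs_add_le _ _
            _ ≤ K * ε + ε := by have := hKb e; rw [abs_neg, abs_of_pos hε]; linarith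
            _ = (K + 1) * ε := by ring
        · rw [sub_zero]
          have := hKb e; nlinarith
      · intro w
        have hs1 : (∑ e, if src e = w then (x'' e - if e = e₀ then ε else 0) else 0)
            = (∑ e, if src e = w then x'' e else 0) - (if src e₀ = w then ε else 0) := by
          have hpt : ∀ e, (if src e = w then (x'' e - if e = e₀ then ε else 0) else 0)
              = (if src e = w then x'' e else 0) - (if e = e₀ then (if src e₀ = w then ε else 0) else 0) := by
            intro e
            by_cases h2 : e = e₀
            · subst h2; by_cases h1 : src e = w <;> simp [h1]
            · by_cases h1 : src e = w <;> simp [h1, h2]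
          rw [Finset.sum_congr rfl fun e _ => hpt e, Finset.sum_sub_distrib,
            Finset.sum_ite_eq' Finset.univ e₀ fun _ => (if src e₀ = w then ε else 0)]
          simp
        have hd1 : (∑ e, if dst e = w then (x'' e - if e = e₀ then ε else 0) else 0)
            = (∑ e, if dst e = w then x'' e else 0) - (if dst e₀ = w then ε else 0) := by
          have hpt : ∀ e, (if dst e = w then (x'' e - if e = e₀ then ε else 0) else 0)
              = (if dst e = w then x'' e else 0) - (if e = e₀ then (if dst e₀ = w then ε else 0) else 0) := by
            intro e
            by_cases h2 : e = e₀
            · subst h2; by_cases h1 : dst e = w <;> simp [h1]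
            · by_cases h1 : dst e = w <;> simp [h1, h2]
          rw [Finset.sum_congr rfl fun e _ => hpt e, Finset.sum_sub_distrib,
            Finset.sum_ite_eq' Finset.univ e₀ fun _ => (if dst e₀ = w then ε else 0)]
          simp
        show (∑ e, if src e = w then (x'' e - if e = e₀ then ε else 0) else 0)
            - (∑ e, if dst e = w then (x'' e - if e = e₀ then ε else 0) else 0) = _
        rw [hs1, hd1, hsrc, hdst, auxIfComm (a := b) (w := w), auxIfComm (a := a) (w := w)]
        have hDw := hD w
        split_ifs at hDw ⊢ <;> linarith

/-- A maximum flow saturates some s-t-cut. -/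
lemma auxMinCut (src dst : E → V) (s t : V) (c : E → ℝ)
    (hst : s ≠ t) (hts : ∀ e, src e ≠ t)
    (x : E → ℝ) (hx : IsFlow src dst s t c x)
    (hmaxf : ∀ y, IsFlow src dst s t c y → flowVal dst t y ≤ flowVal dst t x) :
    ∃ S : Finset V, s ∈ S ∧ t ∉ S ∧ flowVal dst t x = ∑ e ∈ cutArcs src dst S, c e := by
  classical
  obtain ⟨hx0, hxc, hcons⟩ := hx
  set R := auxResid src dst c x with hR
  set S : Finset V := Finset.univ.filter (fun v => Relation.ReflTransGen R s v) with hSdef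
  have hsS : s ∈ S := Finset.mem_filter.2 ⟨Finset.mem_univ _, Relation.ReflTransGen.refl⟩
  have htS : t ∉ S := by
    intro hmem
    have hreach : Relation.ReflTransGen R s t := (Finset.mem_filter.1 hmem).2
    obtain ⟨K, hK0, δ, hδ, h⟩ := auxAugment src dst t c x hx0 hxc s hreach
    obtain ⟨x', h0, hc', _, hD⟩ := h δ hδ le_rfl
    have hcons' : Conserves src dst s t x' := by
      intro w hws hwt
      have hDw := hD w
      rw [if_neg hws, if_neg hwt] at hDw
      have hbase := hcons w hws hwt
      linarith
    have hval : flowVal dst t x' = flowVal dst t x + δ := by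
      have hDt := hD t
      rw [if_neg (fun h' => hst h'.symm), if_pos rfl] at hDt
      have hsrc0 : (∑ e, if src e = t then x' e else 0) = 0 :=
        Finset.sum_eq_zero fun e _ => by simp [hts e]
      have hsrc0' : (∑ e, if src e = t then x e else 0) = 0 :=
        Finset.sum_eq_zero fun e _ => by simp [hts e]
      rw [hsrc0, hsrc0'] at hDt
      unfold flowVal
      linarith
    have := hmaxf x' ⟨h0, hc', hcons'⟩
    rw [hval] at this
    linarith
  have hsat : ∀ e, src e ∈ S → dst e ∉ S → x e = c e := by
    intro e heS heT
    by_contra hne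
    have hlt : x e < c e := lt_of_le_of_ne (hxc e) hne
    have hreach : Relation.ReflTransGen R s (dst e) :=
      ((Finset.mem_filter.1 heS).2).tail ⟨e, Or.inl ⟨rfl, rfl, hlt⟩⟩
    exact heT (Finset.mem_filter.2 ⟨Finset.mem_univ _, hreach⟩)
  have hzero : ∀ e, dst e ∈ S → src e ∉ S → x e = 0 := by
    intro e heS heT
    by_contra hne
    have hpos : 0 < x e := lt_of_le_of_ne (hx0 e) (Ne.symm hne)
    have hreach : Relation.ReflTransGen R s (src e) :=
      ((Finset.mem_filter.1 heS).2).tail ⟨e, Or.inr ⟨rfl, rfl, hpos⟩⟩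
    exact heT (Finset.mem_filter.2 ⟨Finset.mem_univ _, hreach⟩)
  refine ⟨S, hsS, htS, ?_⟩
  rw [auxFlowValCut src dst s t x hts hcons S hsS htS]
  have h1 : (∑ e ∈ cutArcs src dst S, x e) = ∑ e ∈ cutArcs src dst S, c e := by
    refine Finset.sum_congr rfl fun e he => ?_
    have hm := Finset.mem_filter.1 he
    exact hsat e hm.2.1 hm.2.2
  have h2 : (∑ e ∈ Finset.univ.filter (fun e => dst e ∈ S ∧ src e ∉ S), x e) = 0 := by
    refine Finset.sum_eq_zero fun e he => ?_
    have hm := Finset.mem_filter.1 he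
    exact hzero e hm.2.1 hm.2.2
  rw [h1, h2]
  ring

/-- Existence of a maximum flow, by compactness. -/
lemma auxMaxFlowExists (src dst : E → V) (s t : V) (c : E → ℝ) (hc0 : ∀ e, 0 ≤ c e) :
    ∃ x, IsFlow src dst s t c x ∧ ∀ y, IsFlow src dst s t c y → flowVal dst t y ≤ flowVal dst t x := by
  have hcont : ∀ (f : E → V) (w : V), Continuous fun x : E → ℝ => ∑ e, if f e = w then x e else 0 := by
    intro f w
    refine continuous_finset_sum _ fun e _ => ?_
    by_cases h : f e = w
    · simpa [h] using continuous_apply e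
    · simp only [h, if_false]
      exact continuous_const
  have hKeq : {x : E → ℝ | IsFlow src dst s t c x}
      = (Set.univ.pi fun e => Set.Icc (0:ℝ) (c e)) ∩ {x | Conserves src dst s t x} := by
    ext y
    constructor
    · rintro ⟨h0, hc, hcons⟩
      exact ⟨fun e _ => Set.mem_Icc.2 ⟨h0 e, hc e⟩, hcons⟩
    · rintro ⟨hpi, hcons⟩
      exact ⟨fun e => (Set.mem_Icc.1 (hpi e (Set.mem_univ e))).1,
        fun e => (Set.mem_Icc.1 (hpi e (Set.mem_univ e))).2, hcons⟩
  have hclosed : IsClosed {x : E → ℝ | Conserves src dst s t x} := by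
    have heq : {x : E → ℝ | Conserves src dst s t x}
        = ⋂ (v : V), {x : E → ℝ | v ≠ s → v ≠ t →
          (∑ e, if dst e = v then x e else 0) = (∑ e, if src e = v then x e else 0)} := by
      ext y
      simp [Conserves, Set.mem_iInter]
    rw [heq]
    refine isClosed_iInter fun v => ?_
    by_cases hvs : v ≠ s ∧ v ≠ t
    · have heq2 : {x : E → ℝ | v ≠ s → v ≠ t →
          (∑ e, if dst e = v then x e else 0) = (∑ e, if src e = v then x e else 0)}
          = {x : E → ℝ | (∑ e, if dst e = v then x e else 0) = (∑ e, if src e = v then x e else 0)} := by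
        ext y; simp [hvs.1, hvs.2]
      rw [heq2]
      exact isClosed_eq (hcont dst v) (hcont src v)
    · have heq2 : {x : E → ℝ | v ≠ s → v ≠ t →
          (∑ e, if dst e = v then x e else 0) = (∑ e, if src e = v then x e else 0)}
          = Set.univ := by
        ext y
        simp only [Set.mem_setOf_eq, Set.mem_univ, iff_true]
        intro h1 h2
        exact absurd ⟨h1, h2⟩ hvs
      rw [heq2]
      exact isClosed_univ
  have hcomp : IsCompact {x : E → ℝ | IsFlow src dst s t c x} := by
    rw [hKeq]
    exact (isCompact_univ_pi fun e => isCompact_Icc).inter_right hclosed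
  have hne : {x : E → ℝ | IsFlow src dst s t c x}.Nonempty :=
    ⟨fun _ => 0, fun e => le_refl 0, fun e => hc0 e, fun v _ _ => by simp⟩
  have hcontVal : Continuous fun x : E → ℝ => flowVal dst t x := hcont dst t
  obtain ⟨x, hxK, hmax⟩ := hcomp.exists_isMaxOn hne hcontVal.continuousOn
  exact ⟨x, hxK, fun y hy => hmax hy⟩

lemma auxValBound (dst : E → V) (t : V) (u : E → ℝ) (hu0 : ∀ e, 0 ≤ u e)
    (y : E → ℝ) (hyu : ∀ e, y e ≤ u e) : flowVal dst t y ≤ ∑ e, u e := by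
  refine Finset.sum_le_sum fun e _ => ?_
  split_ifs
  · exact hyu e
  · exact hu0 e

/-- Any feasible value of the LO model at parameter `θ'` is at most `Z_LO`. -/
lemma auxZLOadmin (src dst : E → V) (s t : V) (u : E → ℝ) (Γ : ℕ) (hu0 : ∀ e, 0 ≤ u e) :
    ∀ θ' : ℝ, 0 ≤ θ' → ∀ x : E → ℝ, IsFlow src dst s t u x → (∀ e, x e ≤ θ') →
      flowVal dst t x - Γ * θ' ≤ Z_LO src dst s t u Γ := by
  intro θ' hθ' x hx hxθ
  have hbound : ∀ θ'' : ℝ, 0 ≤ θ'' → ∀ z ∈ {z : ℝ | ∃ x : E → ℝ, IsFlow src dst s t u x ∧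
      (∀ e, x e ≤ θ'') ∧ z = flowVal dst t x - Γ * θ''}, z ≤ ∑ e, u e := by
    rintro θ'' hθ'' z ⟨y, hy, hyθ, rfl⟩
    have h1 := auxValBound dst t u hu0 y hy.2.1
    have h2 : 0 ≤ (Γ:ℝ) * θ'' := mul_nonneg (Nat.cast_nonneg _) hθ''
    linarith
  have h1 : flowVal dst t x - Γ * θ' ≤ Z_LOAt src dst s t u Γ θ' :=
    le_csSup ⟨∑ e, u e, fun z hz => hbound θ' hθ' z hz⟩ ⟨x, hx, hxθ, rfl⟩
  have h2 : Z_LOAt src dst s t u Γ θ' ≤ Z_LO src dst s t u Γ := by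
    apply le_csSup
    · refine ⟨∑ e, u e, ?_⟩
      rintro z ⟨θ'', hθ'', rfl⟩
      apply csSup_le
      · exact ⟨0 - Γ * θ'', fun _ => 0,
          ⟨fun e => le_refl 0, fun e => hu0 e, fun v _ _ => by simp⟩,
          fun e => hθ'', by simp [flowVal]⟩
      · exact fun z hz => hbound θ'' hθ'' z hz
    · exact ⟨θ', hθ', rfl⟩
  linarith

lemma auxPosMin {α : Type} (T : Finset α) (f : α → ℝ) (hf : ∀ a ∈ T, 0 < f a) :
    ∃ ε : ℝ, 0 < ε ∧ ∀ a ∈ T, ε ≤ f a := by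
  classical
  rcases T.eq_empty_or_nonempty with rfl | hT
  · exact ⟨1, one_pos, by simp⟩
  · refine ⟨(T.image f).min' (hT.image f), ?_, ?_⟩
    · obtain ⟨a, ha, hmin⟩ := Finset.mem_image.1 ((T.image f).min'_mem (hT.image f))
      rw [← hmin]
      exact hf a ha
    · intro a ha
      exact Finset.min'_le _ _ (Finset.mem_image_of_mem f ha)

end AuxProof8

/-- for an optimal LO solution `(x*,θ*)` with maximal `θ*`, there is an
s-t-cut `S''` with `Val(x*) = Cap(S'',θ*)` and `|B(S'',θ*)| < Γ`. -/
theorem exists_cut_B_lt_Gamma (src dst : E → V) (s t : V) (u : E → ℝ) (Γ : ℕ)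
    (hnet : IsNetwork src dst s t u) (hΓ1 : 1 ≤ Γ) (hΓE : Γ ≤ Fintype.card E)
    (x : E → ℝ) (θ : ℝ) (hopt : IsLOOptimal src dst s t u Γ x θ)
    (hmax : ∀ (x' : E → ℝ) (θ' : ℝ), IsLOOptimal src dst s t u Γ x' θ' → θ' ≤ θ) :
    ∃ S : Finset V, s ∈ S ∧ t ∉ S ∧ flowVal dst t x = cutCap src dst u S θ ∧
      (cutB src dst u S θ).card < Γ := by
  classical
  obtain ⟨hst, hds, hts, hu0⟩ := hnet
  obtain ⟨hxflow, hθ0, hxθ, hval⟩ := hopt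
  obtain ⟨hx0, hxu, hcons⟩ := hxflow
  have hΓpos : (0:ℝ) < (Γ:ℝ) := by exact_mod_cast Nat.lt_of_lt_of_le Nat.zero_lt_one hΓ1
  set c : E → ℝ := fun e => min (u e) θ with hc
  have hc0 : ∀ e, 0 ≤ c e := fun e => le_min (hu0 e) hθ0
  have hxcflow : IsFlow src dst s t c x :=
    ⟨hx0, fun e => le_min (hxu e) (hxθ e), hcons⟩
  -- x is a maximum flow for the truncated capacities c
  have hmaxf : ∀ y, IsFlow src dst s t c y → flowVal dst t y ≤ flowVal dst t x := by
    intro y hy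
    by_contra hlt
    push_neg at hlt
    have hyu : IsFlow src dst s t u y :=
      ⟨hy.1, fun e => le_trans (hy.2.1 e) (min_le_left _ _), hy.2.2⟩
    have hyθ : ∀ e, y e ≤ θ := fun e => le_trans (hy.2.1 e) (min_le_right _ _)
    have := auxZLOadmin src dst s t u Γ hu0 θ hθ0 y hyu hyθ
    rw [← hval] at this
    linarith
  obtain ⟨S₀, hs₀, ht₀, hcut₀⟩ := auxMinCut src dst s t c hst hts x hxcflow hmaxf
  have hcut₀' : flowVal dst t x = cutCap src dst u S₀ θ := by
    rw [hcut₀]; unfold cutCap; simp only [hc]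
  -- weak duality against every cut
  have hwd : ∀ S : Finset V, s ∈ S → t ∉ S → flowVal dst t x ≤ cutCap src dst u S θ := by
    intro S hS htS
    rw [auxFlowValCut src dst s t x hts hcons S hS htS]
    have h1 : (∑ e ∈ cutArcs src dst S, x e) ≤ ∑ e ∈ cutArcs src dst S, min (u e) θ :=
      Finset.sum_le_sum fun e _ => le_min (hxu e) (hxθ e)
    have h2 : (0:ℝ) ≤ ∑ e ∈ Finset.univ.filter (fun e => dst e ∈ S ∧ src e ∉ S), x e :=
      Finset.sum_nonneg fun e _ => hx0 e
    unfold cutCap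
    linarith
  by_contra hcon
  push_neg at hcon
  have hcon' : ∀ S : Finset V, s ∈ S → t ∉ S → flowVal dst t x = cutCap src dst u S θ →
      Γ ≤ (cutB src dst u S θ).card := fun S h1 h2 h3 => hcon S h1 h2 h3
  -- there is an arc with θ < u e
  have hB₀ : Γ ≤ (cutB src dst u S₀ θ).card := hcon' S₀ hs₀ ht₀ hcut₀'
  have hBne : (cutB src dst u S₀ θ).Nonempty := by
    rw [← Finset.card_pos]
    omega
  -- choose ε
  obtain ⟨ε₁, hε₁pos, hε₁⟩ := auxPosMin (Finset.univ.filter (fun e => θ < u e))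
    (fun e => u e - θ) (by
      intro e he
      have := (Finset.mem_filter.1 he).2
      show (0:ℝ) < u e - θ
      linarith)
  obtain ⟨ε₂, hε₂pos, hε₂⟩ := auxPosMin
    ((Finset.univ : Finset (Finset V)).filter (fun S => flowVal dst t x < cutCap src dst u S θ))
    (fun S => (cutCap src dst u S θ - flowVal dst t x) / Γ) (by
      intro S hS
      have := (Finset.mem_filter.1 hS).2
      show (0:ℝ) < (cutCap src dst u S θ - flowVal dst t x) / Γ
      exact div_pos (by linarith) hΓpos)
  set ε : ℝ := min ε₁ ε₂ with hε
  have hε0 : 0 < ε := lt_min hε₁pos hε₂pos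
  have hεθ : ∀ e, θ < u e → θ + ε ≤ u e := by
    intro e he
    have h1 := hε₁ e (Finset.mem_filter.2 ⟨Finset.mem_univ _, he⟩)
    have h2 : ε ≤ ε₁ := min_le_left _ _
    linarith
  -- every cut at θ + ε has capacity at least Val(x) + Γε
  have hkey : ∀ S : Finset V, s ∈ S → t ∉ S →
      flowVal dst t x + Γ * ε ≤ cutCap src dst u S (θ + ε) := by
    intro S hS htS
    rcases eq_or_lt_of_le (hwd S hS htS) with heq | hltc
    · have hcard := hcon' S hS htS heq
      have hPB : cutB src dst u S θ = (cutArcs src dst S).filter (fun e => θ < u e) := by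
        ext e
        simp [cutB]
      have hsplit : cutCap src dst u S (θ + ε)
          = cutCap src dst u S θ + (cutB src dst u S θ).card * ε := by
        unfold cutCap
        rw [← Finset.sum_filter_add_sum_filter_not (cutArcs src dst S) (fun e => θ < u e)
            (fun e => min (u e) (θ + ε)),
          ← Finset.sum_filter_add_sum_filter_not (cutArcs src dst S) (fun e => θ < u e)
            (fun e => min (u e) θ), hPB]
        have hA : (∑ e ∈ (cutArcs src dst S).filter (fun e => θ < u e), min (u e) (θ + ε))
            = (∑ e ∈ (cutArcs src dst S).filter (fun e => θ < u e), (min (u e) θ + ε)) := by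
          refine Finset.sum_congr rfl fun e he => ?_
          have hθu := (Finset.mem_filter.1 he).2
          have h1 := hεθ e hθu
          rw [min_eq_right h1, min_eq_right (le_of_lt hθu)]
        have hA2 : (∑ e ∈ (cutArcs src dst S).filter (fun e => θ < u e), (min (u e) θ + ε))
            = (∑ e ∈ (cutArcs src dst S).filter (fun e => θ < u e), min (u e) θ)
              + ((cutArcs src dst S).filter (fun e => θ < u e)).card * ε := by
          rw [Finset.sum_add_distrib, Finset.sum_const, nsmul_eq_mul]
        have hBeq : (∑ e ∈ (cutArcs src dst S).filter (fun e => ¬ θ < u e), min (u e) (θ + ε))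
            = (∑ e ∈ (cutArcs src dst S).filter (fun e => ¬ θ < u e), min (u e) θ) := by
          refine Finset.sum_congr rfl fun e he => ?_
          have hθu := (Finset.mem_filter.1 he).2
          push_neg at hθu
          rw [min_eq_left hθu, min_eq_left (by linarith : u e ≤ θ + ε)]
        rw [hA, hA2, hBeq]
        ring
      have hΓcard : (Γ:ℝ) * ε ≤ ((cutB src dst u S θ).card : ℝ) * ε :=
        mul_le_mul_of_nonneg_right (by exact_mod_cast hcard) (le_of_lt hε0)
      rw [hsplit]
      linarith
    · have hmem : S ∈ (Finset.univ : Finset (Finset V)).filter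
          (fun S => flowVal dst t x < cutCap src dst u S θ) :=
        Finset.mem_filter.2 ⟨Finset.mem_univ _, hltc⟩
      have h2 := hε₂ S hmem
      have h3 : ε ≤ (cutCap src dst u S θ - flowVal dst t x) / Γ :=
        le_trans (min_le_right _ _) h2
      rw [le_div_iff₀ hΓpos] at h3
      have hmono : cutCap src dst u S θ ≤ cutCap src dst u S (θ + ε) :=
        Finset.sum_le_sum fun e _ => min_le_min le_rfl (by linarith)
      nlinarith
  -- a maximum flow for capacities truncated at θ + ε
  set c₂ : E → ℝ := fun e => min (u e) (θ + ε) with hc₂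
  have hc₂0 : ∀ e, 0 ≤ c₂ e := fun e => le_min (hu0 e) (by linarith)
  obtain ⟨x₂, hx₂, hmax₂⟩ := auxMaxFlowExists src dst s t c₂ hc₂0
  obtain ⟨S₂, hs₂, ht₂, hcut₂⟩ := auxMinCut src dst s t c₂ hst hts x₂ hx₂ hmax₂
  have hval₂ : flowVal dst t x₂ = cutCap src dst u S₂ (θ + ε) := by
    rw [hcut₂]; unfold cutCap; simp only [hc₂]
  have hge : flowVal dst t x + Γ * ε ≤ flowVal dst t x₂ := by
    rw [hval₂]; exact hkey S₂ hs₂ ht₂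
  have hx₂u : IsFlow src dst s t u x₂ :=
    ⟨hx₂.1, fun e => le_trans (hx₂.2.1 e) (min_le_left _ _), hx₂.2.2⟩
  have hx₂θ : ∀ e, x₂ e ≤ θ + ε := fun e => le_trans (hx₂.2.1 e) (min_le_right _ _)
  have hub := auxZLOadmin src dst s t u Γ hu0 (θ + ε) (by linarith) x₂ hx₂u hx₂θ
  have hopt₂ : IsLOOptimal src dst s t u Γ x₂ (θ + ε) := by
    refine ⟨hx₂u, by linarith, hx₂θ, le_antisymm hub ?_⟩
    rw [← hval]
    have hexp : (Γ:ℝ) * (θ + ε) = Γ * θ + Γ * ε := by ring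
    linarith [hge, hexp.le]
  have := hmax x₂ (θ + ε) hopt₂
  linarith

end NetworkInterdiction
end
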